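/- arXiv:2308.14567 — 7 statements merged into one kernel-verified Lean document; each statement's English description precedes it below -/
import Mathlib

section
/- Let 𝔬 be a commutative ring, A a commutative 𝔬-algebra, σ : A → A an 𝔬-algebra endomorphism, Δ a σ-derivation on A, and q ∈ A such that Δ(σ(z)) = q·σ(Δ(z)) for all z ∈ A. Define the bracket coefficient C(a,b) := σ(a)Δ(b) − σ(b)Δ(a) for a, b ∈ A, so that ⟪a·Δ, b·Δ⟫ = C(a,b)·Δ. Then the twisted (hom-Lie) Jacobi identity holds: the cyclic sum over (a, b, c) of C(σ(a), C(b,c)) + q·C(a, C(b,c)) is zero, i.e. [C(σ(a),C(b,c)) + C(σ(b),C(c,a)) + C(σ(c),C(a,b))] + q·[C(a,C(b,c)) + C(b,C(c,a)) + C(c,C(a,b))] = 0 for all a, b, c ∈ A. -/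
/-!
Since `A` is commutative, `Δ (x * y) = Δ (y * x)`, which by the σ-Leibniz rule says
`Δ x * (y - σ y) = Δ y * (x - σ x)`. Expanding the twisted Jacobi sum with the Leibniz rule and
`Δ ∘ σ = q • σ ∘ Δ`, everything cancels except the second-order terms
`q * Δ (Δ c) * (σ a * σ (σ b) - σ (σ a) * σ b)` and their cyclic shifts. The identity above, with
`x = σ a` and `y = Δ c`, rewrites `Δ (Δ c) * (σ a - σ (σ a))` as `q * σ (Δ a) * (Δ c - σ (Δ c))`,
and after this substitution the remaining first-order terms cancel as well.
-/

section SigmaDerivation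

variable {A : Type*} [CommRing A]

def homLieCoeff (σ Δ : A → A) (a b : A) : A := σ a * Δ b - σ b * Δ a

theorem sigmaDeriv_mul_sub_comm {σ Δ : A → A} (hΔ : ∀ b c, Δ (b * c) = Δ b * c + σ b * Δ c)
    (x y : A) : Δ x * (y - σ y) = Δ y * (x - σ x) := by
  linear_combination hΔ y x - hΔ x y + congrArg Δ (mul_comm x y)

theorem homLieCoeff_jacobi {F G : Type*} [FunLike F A A] [RingHomClass F A A] [FunLike G A A]
    [AddMonoidHomClass G A A] {σ : F} {Δ : G} (hΔ : ∀ b c, Δ (b * c) = Δ b * c + σ b * Δ c)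
    {q : A} (hq : ∀ z, Δ (σ z) = q * σ (Δ z)) (a b c : A) :
    let C := homLieCoeff σ Δ
    (C (σ a) (C b c) + C (σ b) (C c a) + C (σ c) (C a b))
      + q * (C a (C b c) + C b (C c a) + C c (C a b)) = 0 := by
  have key (x y : A) : Δ (Δ y) * (σ x - σ (σ x)) = q * σ (Δ x) * (Δ y - σ (Δ y)) := by
    rw [← sigmaDeriv_mul_sub_comm hΔ, hq]
  simp only [homLieCoeff, map_sub, map_mul, hΔ, hq]
  linear_combination q * (σ b * key a c - σ a * key b c + σ c * key b a
    - σ b * key c a + σ a * key c b - σ c * key a b)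

end SigmaDerivation

/-- Let `𝔬` be a commutative ring, `A` a commutative `𝔬`-algebra,
`σ : A → A` an `𝔬`-algebra endomorphism, `Δ` a `σ`-derivation on `A`, and `q ∈ A`
with `Δ (σ z) = q * σ (Δ z)` for all `z`.  With the bracket coefficient
`C a b := σ a * Δ b − σ b * Δ a`, the twisted (hom-Lie) Jacobi identity holds:
`[C (σ a) (C b c) + C (σ b) (C c a) + C (σ c) (C a b)]
  + q * [C a (C b c) + C b (C c a) + C c (C a b)] = 0`. -/
theorem homLie_jacobi (𝔬 A : Type*) [CommRing 𝔬] [CommRing A] [Algebra 𝔬 A]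
    (σ : A →ₐ[𝔬] A) (Δ : A →ₗ[𝔬] A)
    (hΔ : ∀ b c : A, Δ (b * c) = Δ b * c + σ b * Δ c)
    (q : A) (hq : ∀ z : A, Δ (σ z) = q * σ (Δ z))
    (C : A → A → A) (hC : ∀ a b : A, C a b = σ a * Δ b - σ b * Δ a) :
    ∀ a b c : A,
      (C (σ a) (C b c) + C (σ b) (C c a) + C (σ c) (C a b))
        + q * (C a (C b c) + C b (C c a) + C c (C a b)) = 0 := by
  obtain rfl : C = homLieCoeff σ Δ := funext₂ hC
  exact homLieCoeff_jacobi hΔ hq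
end

section
/- Let k be a field, n ≥ 2, ζ ∈ k a nonzero element, and r an integer. Then the quantum affine space, i.e. the associative unital k-algebra with generators e₀, …, e_{n−1} and relations e_i e_j = ζ^{r(j−i)} e_j e_i for all 0 ≤ i, j ≤ n−1, is a domain (it has no zero divisors and is nontrivial). -/
/-- The defining relations of the quantum affine `n`-space over `k` with parameter
`ζ` and level `r`: generators `e₀, …, e_{n−1}` and relations
`e_i e_j = ζ^{r(j−i)} e_j e_i`. -/
inductive QuantumAffineRel (k : Type*) [Field k] (n : ℕ) (ζ : k) (r : ℤ) :
    FreeAlgebra k (Fin n) → FreeAlgebra k (Fin n) → Prop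
  | rel (i j : Fin n) :
      QuantumAffineRel k n ζ r (FreeAlgebra.ι k i * FreeAlgebra.ι k j)
        (ζ ^ (r * ((j : ℤ) - (i : ℤ))) • (FreeAlgebra.ι k j * FreeAlgebra.ι k i))

/-- The quantum affine `n`-space over `k`. -/
abbrev QuantumAffineSpace (k : Type*) [Field k] (n : ℕ) (ζ : k) (r : ℤ) :=
  RingQuot (QuantumAffineRel k n ζ r)

namespace QASAux

variable {k : Type*} [Field k] {n : ℕ}

/-- The weight of a pair of indices. -/
def w (r : ℤ) (i j : Fin n) : ℤ :=
  if (j : ℕ) < (i : ℕ) then r * ((j : ℤ) - (i : ℤ)) else 0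

lemma w_id (r : ℤ) (i j : Fin n) :
    w r i j = r * ((j : ℤ) - (i : ℤ)) + w r j i := by
  unfold w
  split_ifs with h1 h2 h2
  · omega
  · ring
  · push_cast; ring
  · have : (i : ℕ) = (j : ℕ) := by omega
    rw [this]; ring

/-- The biadditive exponent form. -/
def phi (r : ℤ) (a b : Fin n →₀ ℕ) : ℤ :=
  ∑ i : Fin n, ∑ j : Fin n, w r i j * (a i : ℤ) * (b j : ℤ)

lemma phi_add_left (r : ℤ) (a b c : Fin n →₀ ℕ) :
    phi r (a + b) c = phi r a c + phi r b c := by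
  unfold phi
  rw [← Finset.sum_add_distrib]
  refine Finset.sum_congr rfl fun i _ => ?_
  rw [← Finset.sum_add_distrib]
  refine Finset.sum_congr rfl fun j _ => ?_
  simp only [Finsupp.add_apply]
  push_cast; ring

lemma phi_add_right (r : ℤ) (a b c : Fin n →₀ ℕ) :
    phi r a (b + c) = phi r a b + phi r a c := by
  unfold phi
  rw [← Finset.sum_add_distrib]
  refine Finset.sum_congr rfl fun i _ => ?_
  rw [← Finset.sum_add_distrib]
  refine Finset.sum_congr rfl fun j _ => ?_
  simp only [Finsupp.add_apply]
  push_cast; ring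

lemma phi_zero_left (r : ℤ) (b : Fin n →₀ ℕ) : phi r 0 b = 0 := by
  simp [phi]

lemma phi_zero_right (r : ℤ) (a : Fin n →₀ ℕ) : phi r a 0 = 0 := by
  simp [phi]

/-- The basis delta. -/
noncomputable def dd (i : Fin n) : Fin n →₀ ℕ := Finsupp.single i 1

lemma phi_dd_left (r : ℤ) (i : Fin n) (b : Fin n →₀ ℕ) :
    phi r (dd i) b = ∑ j : Fin n, w r i j * (b j : ℤ) := by
  unfold phi dd
  rw [Finset.sum_eq_single i]
  · simp
  · intro i' _ hne
    apply Finset.sum_eq_zero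
    intro j _
    rw [Finsupp.single_apply, if_neg (Ne.symm hne)]
    simp
  · intro h; exact absurd (Finset.mem_univ i) h

lemma phi_dd_dd (r : ℤ) (i j : Fin n) : phi r (dd i) (dd j) = w r i j := by
  rw [phi_dd_left]
  rw [Finset.sum_eq_single j]
  · simp [dd]
  · intro j' _ hne
    rw [dd, Finsupp.single_apply, if_neg (Ne.symm hne)]
    simp
  · intro h; exact absurd (Finset.mem_univ j) h

lemma phi_dd_eq_zero (r : ℤ) (i : Fin n) (a : Fin n →₀ ℕ)
    (h : ∀ t ∈ a.support, i ≤ t) : phi r (dd i) a = 0 := by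
  rw [phi_dd_left]
  apply Finset.sum_eq_zero
  intro j _
  by_cases hj : a j = 0
  · simp [hj]
  · have hij : i ≤ j := h j (Finsupp.mem_support_iff.mpr hj)
    have : ¬ ((j : ℕ) < (i : ℕ)) := by exact not_lt.mpr hij
    rw [w, if_neg this, zero_mul]

/-- The twisting scalar. -/
def sig (ζ : k) (r : ℤ) (a b : Fin n →₀ ℕ) : k := ζ ^ (phi r a b)

lemma sig_ne_zero (ζ : k) (hζ : ζ ≠ 0) (r : ℤ) (a b : Fin n →₀ ℕ) :
    sig ζ r a b ≠ 0 := zpow_ne_zero _ hζ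

lemma sig_zero_left (ζ : k) (r : ℤ) (b : Fin n →₀ ℕ) : sig ζ r 0 b = 1 := by
  rw [sig, phi_zero_left, zpow_zero]

lemma sig_zero_right (ζ : k) (r : ℤ) (a : Fin n →₀ ℕ) : sig ζ r a 0 = 1 := by
  rw [sig, phi_zero_right, zpow_zero]

/-- The generator action on the twisted module. -/
noncomputable def D (ζ : k) (r : ℤ) (i : Fin n) :
    Module.End k ((Fin n →₀ ℕ) →₀ k) :=
  Finsupp.lsum k fun b => sig ζ r (dd i) b • Finsupp.lsingle (dd i + b)

lemma D_single (ζ : k) (r : ℤ) (i : Fin n) (b : Fin n →₀ ℕ) (c : k) :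
    D ζ r i (Finsupp.single b c) =
      Finsupp.single (dd i + b) (sig ζ r (dd i) b * c) := by
  rw [D, Finsupp.lsum_single]
  simp [Finsupp.smul_single, smul_eq_mul]

/-- Twisted right translation. -/
noncomputable def R (ζ : k) (r : ℤ) (b : Fin n →₀ ℕ) :
    Module.End k ((Fin n →₀ ℕ) →₀ k) :=
  Finsupp.lsum k fun a => sig ζ r a b • Finsupp.lsingle (a + b)

lemma R_single (ζ : k) (r : ℤ) (b a : Fin n →₀ ℕ) (c : k) :
    R ζ r b (Finsupp.single a c) =
      Finsupp.single (a + b) (sig ζ r a b * c) := by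
  rw [R, Finsupp.lsum_single]
  simp [Finsupp.smul_single, smul_eq_mul]

lemma R_comp (ζ : k) (hζ : ζ ≠ 0) (r : ℤ) (a b : Fin n →₀ ℕ)
    (f : (Fin n →₀ ℕ) →₀ k) :
    R ζ r b (R ζ r a f) = sig ζ r a b • R ζ r (a + b) f := by
  induction f using Finsupp.induction_linear with
  | zero => simp
  | add f g hf hg => rw [map_add, map_add, hf, hg, map_add, smul_add]
  | single a' c =>
    rw [R_single, R_single, R_single]
    have h1 : (a' + a) + b = a' + (a + b) := add_assoc _ _ _
    have h2 : sig ζ r (a' + a) b * (sig ζ r a' a * c) =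
        sig ζ r a b * (sig ζ r a' (a + b) * c) := by
      simp only [sig]
      rw [← mul_assoc, ← mul_assoc, ← zpow_add₀ hζ, ← zpow_add₀ hζ]
      congr 2
      rw [phi_add_left, phi_add_right]
      ring
    rw [h1, h2, Finsupp.smul_single, smul_eq_mul]

/-- The representation of the quantum affine space on the twisted module. -/
noncomputable def rho (ζ : k) (hζ : ζ ≠ 0) (r : ℤ) :
    QuantumAffineSpace k n ζ r →ₐ[k] Module.End k ((Fin n →₀ ℕ) →₀ k) :=
  RingQuot.liftAlgHom k ⟨FreeAlgebra.lift k (D ζ r), by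
    rintro x y ⟨i, j⟩
    rw [map_mul, map_smul, map_mul]
    simp only [FreeAlgebra.lift_ι_apply]
    apply Finsupp.lhom_ext
    intro b c
    rw [Module.End.mul_apply, D_single, D_single, LinearMap.smul_apply,
      Module.End.mul_apply, D_single, D_single]
    have expeq : phi r (dd i) (dd j + b) + phi r (dd j) b =
        r * ((j : ℤ) - (i : ℤ)) + (phi r (dd j) (dd i + b) + phi r (dd i) b) := by
      rw [phi_add_right, phi_add_right, phi_dd_dd, phi_dd_dd, w_id r i j]
      ring
    rw [Finsupp.smul_single, add_left_comm (dd j) (dd i) b]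
    congr 1
    simp only [sig, smul_eq_mul]
    rw [← mul_assoc, ← zpow_add₀ hζ, ← mul_assoc, ← mul_assoc, ← zpow_add₀ hζ,
      ← zpow_add₀ hζ, expeq]
    ring_nf⟩

/-- The generators. -/
noncomputable def E (ζ : k) (r : ℤ) (i : Fin n) : QuantumAffineSpace k n ζ r :=
  RingQuot.mkAlgHom k (QuantumAffineRel k n ζ r) (FreeAlgebra.ι k i)

lemma Ecomm (ζ : k) (r : ℤ) (i j : Fin n) :
    E ζ r i * E ζ r j = ζ ^ (r * ((j : ℤ) - (i : ℤ))) • (E ζ r j * E ζ r i) := by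
  have := RingQuot.mkAlgHom_rel k (QuantumAffineRel.rel (k := k) (n := n)
    (ζ := ζ) (r := r) i j)
  simpa only [map_mul, map_smul, E] using this

lemma rho_E (ζ : k) (hζ : ζ ≠ 0) (r : ℤ) (i : Fin n) :
    rho ζ hζ r (E ζ r i) = D ζ r i := by
  rw [rho, E, RingQuot.liftAlgHom_mkAlgHom_apply, FreeAlgebra.lift_ι_apply]

/-- The "vacuum vector" pairing. -/
noncomputable def T (ζ : k) (hζ : ζ ≠ 0) (r : ℤ) (x : QuantumAffineSpace k n ζ r) :
    (Fin n →₀ ℕ) →₀ k :=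
  rho ζ hζ r x (Finsupp.single 0 1)

lemma T_mul (ζ : k) (hζ : ζ ≠ 0) (r : ℤ) (x y : QuantumAffineSpace k n ζ r) :
    T ζ hζ r (x * y) = rho ζ hζ r x (T ζ hζ r y) := by
  rw [T, T, map_mul, Module.End.mul_apply]

lemma T_add (ζ : k) (hζ : ζ ≠ 0) (r : ℤ) (x y : QuantumAffineSpace k n ζ r) :
    T ζ hζ r (x + y) = T ζ hζ r x + T ζ hζ r y := by
  rw [T, T, T, map_add, LinearMap.add_apply]

lemma T_one (ζ : k) (hζ : ζ ≠ 0) (r : ℤ) :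
    T ζ hζ r (1 : QuantumAffineSpace k n ζ r) = Finsupp.single 0 1 := by
  rw [T, map_one, Module.End.one_apply]

lemma T_E (ζ : k) (hζ : ζ ≠ 0) (r : ℤ) (i : Fin n) :
    T ζ hζ r (E ζ r i) = Finsupp.single (dd i) 1 := by
  rw [T, rho_E, D_single, add_zero, sig_zero_right, one_mul]

lemma T_algebraMap (ζ : k) (hζ : ζ ≠ 0) (r : ℤ) (c : k) :
    T ζ hζ r (algebraMap k (QuantumAffineSpace k n ζ r) c) =
      Finsupp.single 0 c := by
  rw [T, AlgHom.commutes, Module.algebraMap_end_apply, Finsupp.smul_single,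
    smul_eq_mul, mul_one]

/-- The structure theorem for the representation. -/
lemma rho_apply_single (ζ : k) (hζ : ζ ≠ 0) (r : ℤ)
    (x : QuantumAffineSpace k n ζ r) (b : Fin n →₀ ℕ) (c : k) :
    rho ζ hζ r x (Finsupp.single b c) = c • R ζ r b (T ζ hζ r x) := by
  obtain ⟨y, rfl⟩ := RingQuot.mkAlgHom_surjective k (QuantumAffineRel k n ζ r) x
  revert b c
  induction y using FreeAlgebra.induction with
  | grade0 c' =>
    intro b c
    rw [AlgHom.commutes, T_algebraMap, AlgHom.commutes,
      Module.algebraMap_end_apply, R_single, zero_add, sig_zero_left, one_mul,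
      Finsupp.smul_single, Finsupp.smul_single, smul_eq_mul, smul_eq_mul,
      mul_comm]
  | grade1 i =>
    intro b c
    rw [show RingQuot.mkAlgHom k (QuantumAffineRel k n ζ r) (FreeAlgebra.ι k i)
        = E ζ r i from rfl, rho_E, D_single, T_E, R_single, Finsupp.smul_single,
      smul_eq_mul, mul_one, mul_comm]
  | mul x y ihx ihy =>
    intro b c
    rw [map_mul, map_mul, Module.End.mul_apply, ihy b c, map_smul, T_mul]
    congr 1
    -- rho X (R b f) = R b (rho X f) given ihx
    generalize T ζ hζ r (RingQuot.mkAlgHom k (QuantumAffineRel k n ζ r) y) = f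
    induction f using Finsupp.induction_linear with
    | zero => simp
    | add f g hfi hgi => simp only [map_add, hfi, hgi]
    | single a' c' =>
      rw [R_single, ihx, ihx, map_smul, R_comp ζ hζ]
      rw [mul_comm, mul_smul]
  | add x y ihx ihy =>
    intro b c
    rw [map_add, map_add, LinearMap.add_apply, ihx b c, ihy b c, T_add,
      map_add, smul_add]

lemma T_zero (ζ : k) (hζ : ζ ≠ 0) (r : ℤ) :
    T ζ hζ r (0 : QuantumAffineSpace k n ζ r) = 0 := by
  rw [T, map_zero]; rfl

/-- Total degree. -/
def deg (a : Fin n →₀ ℕ) : ℕ := ∑ j : Fin n, a j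

lemma deg_eq_zero {a : Fin n →₀ ℕ} (h : deg a = 0) : a = 0 := by
  ext j
  have := Finset.sum_eq_zero_iff.mp h j (Finset.mem_univ j)
  simpa using this

lemma deg_sub_lt {a : Fin n →₀ ℕ} {i : Fin n} (h : a i ≠ 0) :
    deg (a - Finsupp.single i 1) < deg a := by
  unfold deg
  apply Finset.sum_lt_sum
  · intro j _
    rw [Finsupp.tsub_apply]
    exact Nat.sub_le _ _
  · refine ⟨i, Finset.mem_univ i, ?_⟩
    rw [Finsupp.tsub_apply, Finsupp.single_eq_same]
    omega

/-- Ordered monomials. -/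
noncomputable def mQ (ζ : k) (r : ℤ) (a : Fin n →₀ ℕ) :
    QuantumAffineSpace k n ζ r :=
  if h : a = 0 then 1
  else
    E ζ r (a.support.min' (Finsupp.support_nonempty_iff.mpr h)) *
      mQ ζ r (a - Finsupp.single
        (a.support.min' (Finsupp.support_nonempty_iff.mpr h)) 1)
  termination_by deg a
  decreasing_by
    exact deg_sub_lt (Finsupp.mem_support_iff.mp (Finset.min'_mem _ _))

lemma mQ_zero (ζ : k) (r : ℤ) : mQ (n := n) ζ r 0 = 1 := by
  rw [mQ]; simp

lemma mQ_ne (ζ : k) (r : ℤ) {a : Fin n →₀ ℕ} (h : a ≠ 0) :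
    mQ ζ r a = E ζ r (a.support.min' (Finsupp.support_nonempty_iff.mpr h)) *
      mQ ζ r (a - Finsupp.single
        (a.support.min' (Finsupp.support_nonempty_iff.mpr h)) 1) := by
  rw [mQ, dif_neg h]

lemma E_mul_mQ_of_min (ζ : k) (r : ℤ) (j : Fin n) (a : Fin n →₀ ℕ)
    (h : ∀ t ∈ a.support, j ≤ t) :
    E ζ r j * mQ ζ r a = mQ ζ r (dd j + a) := by
  have hbj : (dd j + a) j ≠ 0 := by
    simp [dd, Finsupp.add_apply, Finsupp.single_eq_same]
  have hne : dd j + a ≠ 0 := fun H => hbj (by rw [H]; rfl)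
  have hjmem : j ∈ (dd j + a).support := Finsupp.mem_support_iff.mpr hbj
  have hmin : (dd j + a).support.min'
      (Finsupp.support_nonempty_iff.mpr hne) = j := by
    apply le_antisymm (Finset.min'_le _ _ hjmem)
    set t := (dd j + a).support.min' (Finsupp.support_nonempty_iff.mpr hne)
      with ht
    have htm : t ∈ (dd j + a).support := Finset.min'_mem _ _
    have htv : (dd j + a) t ≠ 0 := Finsupp.mem_support_iff.mp htm
    by_cases hjt : t = j
    · rw [hjt]
    · have hat : a t ≠ 0 := by
        rwa [Finsupp.add_apply, dd, Finsupp.single_apply,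
          if_neg (fun hh => hjt hh.symm), zero_add] at htv
      exact h t (Finsupp.mem_support_iff.mpr hat)
  rw [mQ_ne ζ r hne, hmin]
  congr 1
  rw [show Finsupp.single j 1 = dd j from rfl, add_tsub_cancel_left]

lemma E_mul_mQ (ζ : k) (hζ : ζ ≠ 0) (r : ℤ) (i : Fin n) (a : Fin n →₀ ℕ) :
    E ζ r i * mQ ζ r a = sig ζ r (dd i) a • mQ ζ r (dd i + a) := by
  suffices H : ∀ d (a : Fin n →₀ ℕ), deg a ≤ d →
      E ζ r i * mQ ζ r a = sig ζ r (dd i) a • mQ ζ r (dd i + a) from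
    H (deg a) a le_rfl
  intro d
  induction d with
  | zero =>
    intro a ha
    have h0 : a = 0 := deg_eq_zero (Nat.le_zero.mp ha)
    subst h0
    rw [sig_zero_right, one_smul, E_mul_mQ_of_min ζ r i 0 (by simp)]
  | succ d ih =>
    intro a ha
    by_cases hmin : ∀ t ∈ a.support, i ≤ t
    · rw [E_mul_mQ_of_min ζ r i a hmin, sig, phi_dd_eq_zero r i a hmin,
        zpow_zero, one_smul]
    · push_neg at hmin
      obtain ⟨t0, ht0mem, ht0⟩ := hmin
      have hane : a ≠ 0 := fun H => by
        rw [H] at ht0mem; simp at ht0mem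
      set jm := a.support.min' (Finsupp.support_nonempty_iff.mpr hane) with hjm
      have hjmlt : jm < i := lt_of_le_of_lt (Finset.min'_le _ _ ht0mem) ht0
      have hjmem' : jm ∈ a.support := Finset.min'_mem _ _
      have hja : a jm ≠ 0 := Finsupp.mem_support_iff.mp hjmem'
      set a' := a - Finsupp.single jm 1 with ha'
      have hrec : mQ ζ r a = E ζ r jm * mQ ζ r a' := mQ_ne ζ r hane
      have hsum : dd jm + a' = a := by
        rw [ha', dd]
        exact add_tsub_cancel_of_le (by
          rw [Finsupp.single_le_iff]; omega)
      have hdeg : deg a' ≤ d := by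
        have := deg_sub_lt (a := a) (i := jm) hja
        rw [← ha'] at this
        omega
      have hsupp : ∀ t ∈ (dd i + a').support, jm ≤ t := by
        intro t htmem
        have := Finsupp.support_add htmem
        rw [Finset.mem_union] at this
        rcases this with h1 | h2
        · rw [dd, Finsupp.support_single_ne_zero i one_ne_zero] at h1
          rw [Finset.mem_singleton] at h1
          subst h1
          exact le_of_lt hjmlt
        · have : a t ≠ 0 := by
            have h3 := Finsupp.mem_support_iff.mp h2
            rw [ha', Finsupp.tsub_apply] at h3
            omega
          exact Finset.min'_le _ _ (Finsupp.mem_support_iff.mpr this)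
      have hw : w r i jm = r * ((jm : ℤ) - (i : ℤ)) := by
        rw [w, if_pos (show (jm : ℕ) < (i : ℕ) from hjmlt)]
      rw [hrec, ← mul_assoc, Ecomm ζ r i jm, smul_mul_assoc, mul_assoc,
        ih a' hdeg, mul_smul_comm, E_mul_mQ_of_min ζ r jm _ hsupp,
        smul_smul]
      rw [add_left_comm, hsum]
      congr 1
      rw [sig, sig, ← zpow_add₀ hζ, ← hsum, phi_add_right, phi_dd_dd, hw]

/-- The linear section. -/
noncomputable def U (ζ : k) (r : ℤ) :
    ((Fin n →₀ ℕ) →₀ k) →ₗ[k] QuantumAffineSpace k n ζ r :=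
  Finsupp.lsum k fun a => LinearMap.toSpanSingleton k _ (mQ ζ r a)

lemma U_single (ζ : k) (r : ℤ) (a : Fin n →₀ ℕ) (c : k) :
    U ζ r (Finsupp.single a c) = c • mQ ζ r a := by
  rw [U, Finsupp.lsum_single, LinearMap.toSpanSingleton_apply]

lemma mul_mQ (ζ : k) (hζ : ζ ≠ 0) (r : ℤ) (x : QuantumAffineSpace k n ζ r)
    (a : Fin n →₀ ℕ) :
    x * mQ ζ r a = U ζ r (R ζ r a (T ζ hζ r x)) := by
  obtain ⟨y, rfl⟩ := RingQuot.mkAlgHom_surjective k (QuantumAffineRel k n ζ r) x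
  revert a
  induction y using FreeAlgebra.induction with
  | grade0 c' =>
    intro a
    rw [AlgHom.commutes, T_algebraMap, R_single, zero_add, sig_zero_left,
      one_mul, U_single, Algebra.smul_def]
  | grade1 i =>
    intro a
    rw [show RingQuot.mkAlgHom k (QuantumAffineRel k n ζ r) (FreeAlgebra.ι k i)
        = E ζ r i from rfl, T_E, R_single, U_single, mul_one,
      E_mul_mQ ζ hζ r i a]
  | add x y ihx ihy =>
    intro a
    rw [map_add, add_mul, ihx a, ihy a, T_add, map_add, map_add]
  | mul x y ihx ihy =>
    intro a
    rw [map_mul, mul_assoc, ihy a, T_mul]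
    generalize T ζ hζ r (RingQuot.mkAlgHom k (QuantumAffineRel k n ζ r) y) = g
    induction g using Finsupp.induction_linear with
    | zero => simp
    | add f g hf hg => simp only [map_add, mul_add, hf, hg]
    | single a' c' =>
      rw [R_single, U_single, mul_smul_comm, ihx (a' + a),
        rho_apply_single ζ hζ r, map_smul, map_smul, R_comp ζ hζ, map_smul,
        smul_smul, mul_comm]

end QASAux

/-- Let `k` be a field, `n ≥ 2`, `ζ ∈ k` nonzero and `r` an integer.
Then the quantum affine space, i.e. the `k`-algebra with generators `e₀, …, e_{n−1}`
and relations `e_i e_j = ζ^{r(j−i)} e_j e_i`, is a domain. -/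
theorem quantumAffineSpace_isDomain (k : Type*) [Field k] (n : ℕ) (hn : 2 ≤ n)
    (ζ : k) (hζ : ζ ≠ 0) (r : ℤ) :
    IsDomain (QuantumAffineSpace k n ζ r) := by
  classical
  open QASAux in
  have Tinj : ∀ x : QuantumAffineSpace k n ζ r, T ζ hζ r x = 0 → x = 0 := by
    intro x hx
    have h1 : x = x * mQ ζ r 0 := by rw [mQ_zero, mul_one]
    rw [h1, mul_mQ ζ hζ r x 0, hx, map_zero, map_zero]
  haveI hnt : Nontrivial (QuantumAffineSpace k n ζ r) := by
    refine ⟨1, 0, fun H => ?_⟩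
    have h2 := congrArg (T ζ hζ r) H
    rw [T_one, T_zero] at h2
    exact one_ne_zero (Finsupp.single_eq_zero.mp h2)
  haveI : NoZeroDivisors (QuantumAffineSpace k n ζ r) := by
    refine ⟨fun {x y} hxy => ?_⟩
    by_contra hcon
    push_neg at hcon
    obtain ⟨hx, hy⟩ := hcon
    have hf : T ζ hζ r x ≠ 0 := fun H => hx (Tinj x H)
    have hg : T ζ hζ r y ≠ 0 := fun H => hy (Tinj y H)
    obtain ⟨a0, ha0, b0, hb0, hu⟩ := UniqueSums.uniqueAdd_of_nonempty
      (Finsupp.support_nonempty_iff.mpr hf) (Finsupp.support_nonempty_iff.mpr hg)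
    have hexp : T ζ hζ r (x * y) =
        (T ζ hζ r y).sum fun b cb => cb • R ζ r b (T ζ hζ r x) := by
      rw [T_mul]
      conv_lhs => rw [← Finsupp.sum_single (T ζ hζ r y), map_finsuppSum]
      exact Finsupp.sum_congr fun b _ =>
        rho_apply_single ζ hζ r x b ((T ζ hζ r y) b)
    have hinner : ∀ b : Fin n →₀ ℕ, b ∈ (T ζ hζ r y).support → b ≠ b0 →
        ((T ζ hζ r y) b • R ζ r b (T ζ hζ r x)) (a0 + b0) = 0 := by
      intro b hb hne
      rw [Finsupp.smul_apply, smul_eq_mul]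
      apply mul_eq_zero_of_right
      rw [R, Finsupp.lsum_apply, Finsupp.sum_apply, Finsupp.sum]
      apply Finset.sum_eq_zero
      intro a ha
      have hne2 : a + b ≠ a0 + b0 := fun hEq => hne (hu ha hb hEq).2
      simp [Finsupp.smul_single, Finsupp.single_apply, hne2]
    have hinner2 : ∀ a : Fin n →₀ ℕ, a ∈ (T ζ hζ r x).support → a ≠ a0 →
        ((sig ζ r a b0 • Finsupp.lsingle (R := k) (M := k) (a + b0)) ((T ζ hζ r x) a))
          (a0 + b0) = 0 := by
      intro a ha hne
      have hne2 : a + b0 ≠ a0 + b0 := fun hEq => hne (hu ha hb0 hEq).1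
      simp [Finsupp.smul_single, Finsupp.single_apply, hne2]
    have hval : (T ζ hζ r (x * y)) (a0 + b0) =
        (T ζ hζ r y) b0 * (sig ζ r a0 b0 * (T ζ hζ r x) a0) := by
      rw [hexp, Finsupp.sum_apply, Finsupp.sum,
        Finset.sum_eq_single_of_mem b0 hb0 hinner, Finsupp.smul_apply,
        smul_eq_mul]
      congr 1
      rw [R, Finsupp.lsum_apply, Finsupp.sum_apply, Finsupp.sum,
        Finset.sum_eq_single_of_mem a0 ha0 hinner2]
      simp [Finsupp.smul_single, Finsupp.single_eq_same, smul_eq_mul]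
    rw [hxy, T_zero] at hval
    have hnz : (T ζ hζ r y) b0 * (sig ζ r a0 b0 * (T ζ hζ r x) a0) ≠ 0 :=
      mul_ne_zero (Finsupp.mem_support_iff.mp hb0)
        (mul_ne_zero (sig_ne_zero ζ hζ r a0 b0) (Finsupp.mem_support_iff.mp ha0))
    exact hnz (by rw [← hval]; rfl)
  exact NoZeroDivisors.to_isDomain _
end

section
/- Let k be a field, n ≥ 2 an integer, ζ ∈ k a primitive n-th root of unity, r an integer, x ∈ k, and set ω := 1 − ζ^{2r}. Assume ω is invertible in k (i.e. ζ^{2r} ≠ 1). Let S be the k-algebra with generators e₀, e₁, e_{n−1} and relations e₀e₁ − ζ^r e₁e₀ = (1 − ζ^r)e₁, e_{n−1}e₀ − ζ^r e₀e_{n−1} = (1 − ζ^r)e_{n−1}, e_{n−1}e₁ − ζ^{2r} e₁e_{n−1} = xω e₀. Then S is isomorphic as a k-algebra to the Jackson algebra 𝒥_x(r), via an isomorphism carrying the generator e_{n−1} of S to the generator e₂ of 𝒥_x(r) and e₁ to e₁. -/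
/-- The defining relations of the Jackson algebra `𝒥_x(r)` over `k`:
generators `e₀, e₁, e₂` and relations `e₀e₁ = ζ^r e₁e₀`, `e₂e₀ = ζ^r e₀e₂`,
`e₂e₁ = ζ^{2r} e₁e₂ + x e₀ + x (1 − ζ^{2r})`. -/
inductive JacksonRel (k : Type*) [Field k] (ζ : k) (r : ℤ) (x : k) :
    FreeAlgebra k (Fin 3) → FreeAlgebra k (Fin 3) → Prop
  | r01 : JacksonRel k ζ r x (FreeAlgebra.ι k 0 * FreeAlgebra.ι k 1)
      (ζ ^ r • (FreeAlgebra.ι k 1 * FreeAlgebra.ι k 0))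
  | r20 : JacksonRel k ζ r x (FreeAlgebra.ι k 2 * FreeAlgebra.ι k 0)
      (ζ ^ r • (FreeAlgebra.ι k 0 * FreeAlgebra.ι k 2))
  | r21 : JacksonRel k ζ r x (FreeAlgebra.ι k 2 * FreeAlgebra.ι k 1)
      (ζ ^ (2 * r) • (FreeAlgebra.ι k 1 * FreeAlgebra.ι k 2) + x • FreeAlgebra.ι k 0 +
        (x * (1 - ζ ^ (2 * r))) • (1 : FreeAlgebra k (Fin 3)))

/-- The Jackson algebra `𝒥_x(r)` over `k`. -/
abbrev Jackson (k : Type*) [Field k] (ζ : k) (r : ℤ) (x : k) :=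
  RingQuot (JacksonRel k ζ r x)

/-- The generators `e₀, e₁, e₂` of the Jackson algebra. -/
noncomputable def JacksonGen (k : Type*) [Field k] (ζ : k) (r : ℤ) (x : k) (i : Fin 3) :
    Jackson k ζ r x :=
  RingQuot.mkAlgHom k (JacksonRel k ζ r x) (FreeAlgebra.ι k i)

/-- The defining relations of the algebra `S`: generators `f₀, f₁, f₂` (with `f₂`
standing for `e_{n−1}`) and relations `f₀f₁ − ζ^r f₁f₀ = (1 − ζ^r) f₁`,
`f₂f₀ − ζ^r f₀f₂ = (1 − ζ^r) f₂`, `f₂f₁ − ζ^{2r} f₁f₂ = x (1 − ζ^{2r}) f₀`. -/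
inductive SRel (k : Type*) [Field k] (ζ : k) (r : ℤ) (x : k) :
    FreeAlgebra k (Fin 3) → FreeAlgebra k (Fin 3) → Prop
  | r01 : SRel k ζ r x (FreeAlgebra.ι k 0 * FreeAlgebra.ι k 1)
      (ζ ^ r • (FreeAlgebra.ι k 1 * FreeAlgebra.ι k 0) + (1 - ζ ^ r) • FreeAlgebra.ι k 1)
  | r20 : SRel k ζ r x (FreeAlgebra.ι k 2 * FreeAlgebra.ι k 0)
      (ζ ^ r • (FreeAlgebra.ι k 0 * FreeAlgebra.ι k 2) + (1 - ζ ^ r) • FreeAlgebra.ι k 2)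
  | r21 : SRel k ζ r x (FreeAlgebra.ι k 2 * FreeAlgebra.ι k 1)
      (ζ ^ (2 * r) • (FreeAlgebra.ι k 1 * FreeAlgebra.ι k 2) +
        (x * (1 - ζ ^ (2 * r))) • FreeAlgebra.ι k 0)

/-- The algebra `S` (the subalgebra of the Kummer–Witt algebra on `e₀, e₁, e_{n−1}`,
presented abstractly). -/
abbrev SAlg (k : Type*) [Field k] (ζ : k) (r : ℤ) (x : k) := RingQuot (SRel k ζ r x)

/-- The generators `f₀, f₁, f₂` of `S`. -/
noncomputable def SGen (k : Type*) [Field k] (ζ : k) (r : ℤ) (x : k) (i : Fin 3) :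
    SAlg k ζ r x :=
  RingQuot.mkAlgHom k (SRel k ζ r x) (FreeAlgebra.ι k i)

/-!
Set `ω = 1 − ζ^{2r}`. The affine change of generator `e₀ = ω (f₀ − 1)`, keeping `e₁ = f₁` and
`e₂ = f₂`, turns the defining relations of `S` into those of `𝒥_x(r)`; since `ω ≠ 0` it can be
inverted by `f₀ = ω⁻¹ e₀ + 1`. Both substitutions therefore define algebra maps between the two
presentations, and they are mutually inverse because they are on generators.
-/

section Relations

variable {k : Type*} [Field k] {A : Type*} [Ring A] [Algebra k A] (ζ : k) (r : ℤ) (x : k)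

structure IsJacksonTriple (e : Fin 3 → A) : Prop where
  mul_01 : e 0 * e 1 = ζ ^ r • (e 1 * e 0)
  mul_20 : e 2 * e 0 = ζ ^ r • (e 0 * e 2)
  mul_21 : e 2 * e 1 = ζ ^ (2 * r) • (e 1 * e 2) + x • e 0 + (x * (1 - ζ ^ (2 * r))) • 1

structure IsSTriple (f : Fin 3 → A) : Prop where
  mul_01 : f 0 * f 1 = ζ ^ r • (f 1 * f 0) + (1 - ζ ^ r) • f 1
  mul_20 : f 2 * f 0 = ζ ^ r • (f 0 * f 2) + (1 - ζ ^ r) • f 2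
  mul_21 : f 2 * f 1 = ζ ^ (2 * r) • (f 1 * f 2) + (x * (1 - ζ ^ (2 * r))) • f 0

theorem isJacksonTriple_iff_lift_eq_of_rel (e : Fin 3 → A) :
    IsJacksonTriple ζ r x e ↔
      ∀ ⦃u v⦄, JacksonRel k ζ r x u v → FreeAlgebra.lift k e u = FreeAlgebra.lift k e v := by
  constructor
  · rintro ⟨h01, h20, h21⟩ u v (_ | _ | _) <;> simpa
  · intro h
    exact ⟨by simpa using h .r01, by simpa using h .r20, by simpa using h .r21⟩

theorem isSTriple_iff_lift_eq_of_rel (f : Fin 3 → A) :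
    IsSTriple ζ r x f ↔
      ∀ ⦃u v⦄, SRel k ζ r x u v → FreeAlgebra.lift k f u = FreeAlgebra.lift k f v := by
  constructor
  · rintro ⟨h01, h20, h21⟩ u v (_ | _ | _) <;> simpa
  · intro h
    exact ⟨by simpa using h .r01, by simpa using h .r20, by simpa using h .r21⟩

theorem IsJacksonTriple.isSTriple_shift {e : Fin 3 → A} (he : IsJacksonTriple ζ r x e)
    (hω : ζ ^ (2 * r) ≠ 1) :
    IsSTriple ζ r x ![(1 - ζ ^ (2 * r))⁻¹ • e 0 + 1, e 1, e 2] := by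
  have hω0 : 1 - ζ ^ (2 * r) ≠ 0 := sub_ne_zero.mpr hω.symm
  refine ⟨?_, ?_, ?_⟩ <;>
    simp only [Matrix.cons_val, add_mul, mul_add, smul_mul_assoc, mul_smul_comm, one_mul,
      mul_one]
  · rw [he.mul_01]; module
  · rw [he.mul_20]; module
  · rw [he.mul_21]
    match_scalars <;> field_simp

theorem IsSTriple.isJacksonTriple_unshift {f : Fin 3 → A} (hf : IsSTriple ζ r x f) :
    IsJacksonTriple ζ r x ![(1 - ζ ^ (2 * r)) • (f 0 - 1), f 1, f 2] := by
  refine ⟨?_, ?_, ?_⟩ <;>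
    simp only [Matrix.cons_val, sub_mul, mul_sub, smul_mul_assoc, mul_smul_comm, one_mul,
      mul_one]
  · rw [hf.mul_01]; module
  · rw [hf.mul_20]; module
  · rw [hf.mul_21]; module

end Relations

section Presentations

variable {k : Type*} [Field k] {A : Type*} [Ring A] [Algebra k A] {ζ : k} {r : ℤ} {x : k}

theorem RingQuot.freeAlgebra_algHom_ext {R X B : Type*} [CommSemiring R] [Semiring B]
    [Algebra R B] {s : FreeAlgebra R X → FreeAlgebra R X → Prop} {φ ψ : RingQuot s →ₐ[R] B}
    (h : ∀ i, φ (RingQuot.mkAlgHom R s (FreeAlgebra.ι R i)) =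
      ψ (RingQuot.mkAlgHom R s (FreeAlgebra.ι R i))) :
    φ = ψ :=
  RingQuot.ringQuot_ext' R _ _ (FreeAlgebra.hom_ext (funext h))

theorem isJacksonTriple_jacksonGen : IsJacksonTriple ζ r x (JacksonGen k ζ r x) := by
  refine (isJacksonTriple_iff_lift_eq_of_rel ζ r x _).2 fun u v h => ?_
  rw [show FreeAlgebra.lift k (JacksonGen k ζ r x) = RingQuot.mkAlgHom k (JacksonRel k ζ r x)
    from FreeAlgebra.lift_comp_ι _]
  exact RingQuot.mkAlgHom_rel k h

theorem isSTriple_sGen : IsSTriple ζ r x (SGen k ζ r x) := by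
  refine (isSTriple_iff_lift_eq_of_rel ζ r x _).2 fun u v h => ?_
  rw [show FreeAlgebra.lift k (SGen k ζ r x) = RingQuot.mkAlgHom k (SRel k ζ r x) from
    FreeAlgebra.lift_comp_ι _]
  exact RingQuot.mkAlgHom_rel k h

noncomputable def Jackson.lift (e : Fin 3 → A) (he : IsJacksonTriple ζ r x e) :
    Jackson k ζ r x →ₐ[k] A :=
  RingQuot.liftAlgHom k
    ⟨FreeAlgebra.lift k e, (isJacksonTriple_iff_lift_eq_of_rel ζ r x e).1 he⟩

noncomputable def SAlg.lift (f : Fin 3 → A) (hf : IsSTriple ζ r x f) : SAlg k ζ r x →ₐ[k] A :=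
  RingQuot.liftAlgHom k ⟨FreeAlgebra.lift k f, (isSTriple_iff_lift_eq_of_rel ζ r x f).1 hf⟩

@[simp]
theorem Jackson.lift_jacksonGen (e : Fin 3 → A) (he : IsJacksonTriple ζ r x e) (i : Fin 3) :
    Jackson.lift e he (JacksonGen k ζ r x i) = e i := by
  simp [Jackson.lift, JacksonGen]

@[simp]
theorem SAlg.lift_sGen (f : Fin 3 → A) (hf : IsSTriple ζ r x f) (i : Fin 3) :
    SAlg.lift f hf (SGen k ζ r x i) = f i := by
  simp [SAlg.lift, SGen]

theorem Jackson.algHom_ext {φ ψ : Jackson k ζ r x →ₐ[k] A}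
    (h : ∀ i, φ (JacksonGen k ζ r x i) = ψ (JacksonGen k ζ r x i)) : φ = ψ :=
  RingQuot.freeAlgebra_algHom_ext h

theorem SAlg.algHom_ext {φ ψ : SAlg k ζ r x →ₐ[k] A}
    (h : ∀ i, φ (SGen k ζ r x i) = ψ (SGen k ζ r x i)) : φ = ψ :=
  RingQuot.freeAlgebra_algHom_ext h

end Presentations

theorem sAlg_iso_jackson_general (k : Type*) [Field k]
    (ζ : k) (r : ℤ) (x : k) (hω : ζ ^ (2 * r) ≠ 1) :
    ∃ φ : SAlg k ζ r x ≃ₐ[k] Jackson k ζ r x,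
      φ (SGen k ζ r x 2) = JacksonGen k ζ r x 2 ∧
      φ (SGen k ζ r x 1) = JacksonGen k ζ r x 1 := by
  have hω0 : 1 - ζ ^ (2 * r) ≠ 0 := sub_ne_zero.mpr hω.symm
  let Φ := SAlg.lift _ (isJacksonTriple_jacksonGen.isSTriple_shift ζ r x hω)
  let Ψ := Jackson.lift _ (isSTriple_sGen.isJacksonTriple_unshift ζ r x)
  have hΦΨ : Φ.comp Ψ = AlgHom.id k _ := Jackson.algHom_ext fun i => by
    fin_cases i <;> simp [Φ, Ψ, smul_smul, hω0]
  have hΨΦ : Ψ.comp Φ = AlgHom.id k _ := SAlg.algHom_ext fun i => by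
    fin_cases i <;> simp [Φ, Ψ, smul_smul, hω0]
  exact ⟨.ofAlgHom Φ Ψ hΦΨ hΨΦ, by simp [Φ], by simp [Φ]⟩

/-- Let `k` be a field, `n ≥ 2`, `ζ ∈ k` a primitive `n`-th root of
unity, `r` an integer, `x ∈ k`, and `ω := 1 − ζ^{2r}` invertible (i.e. `ζ^{2r} ≠ 1`).
Then `S` is isomorphic as a `k`-algebra to the Jackson algebra `𝒥_x(r)`, via an
isomorphism carrying the generator `f₂ = e_{n−1}` of `S` to the generator `e₂` of
`𝒥_x(r)` and `f₁` to `e₁`. -/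
theorem sAlg_iso_jackson (k : Type*) [Field k] (n : ℕ) (hn : 2 ≤ n)
    (ζ : k) (hζ : IsPrimitiveRoot ζ n) (r : ℤ) (x : k) (hω : ζ ^ (2 * r) ≠ 1) :
    ∃ φ : SAlg k ζ r x ≃ₐ[k] Jackson k ζ r x,
      φ (SGen k ζ r x 2) = JacksonGen k ζ r x 2 ∧
      φ (SGen k ζ r x 1) = JacksonGen k ζ r x 1 :=
  sAlg_iso_jackson_general k ζ r x hω
end

section
/- Let k be a field, n ≥ 2 an integer, ζ ∈ k a primitive n-th root of unity, and r an integer such that ζ^r is again a primitive n-th root of unity. In the Jackson algebra 𝒥₀(r) (the case x = 0, whose relations are e₀e₁ = ζ^r e₁e₀, e₂e₀ = ζ^r e₀e₂, e₂e₁ = ζ^{2r} e₁e₂), a monomial e₀^a e₁^b e₂^c (a, b, c ≥ 0) lies in the centre of 𝒥₀(r) if and only if n divides r(a + 2b) and n divides r(b − c). -/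
/-! ### Auxiliary lemmas -/

section Aux

variable {k : Type*} [Field k]

private lemma qcomm_pow_left {A : Type*} [Semiring A] [Algebra k A] {x y : A} {s : k}
    (h : y * x = s • (x * y)) (m : ℕ) : y * x ^ m = s ^ m • (x ^ m * y) := by
  induction m with
  | zero => simp
  | succ m ih =>
    rw [pow_succ, ← mul_assoc, ih, smul_mul_assoc, mul_assoc, h, mul_smul_comm, smul_smul,
      pow_succ, mul_comm (s ^ m) s, ← mul_assoc]

private lemma qcomm_pow_right {A : Type*} [Semiring A] [Algebra k A] {x y : A} {s : k}
    (h : y * x = s • (x * y)) (m : ℕ) : y ^ m * x = s ^ m • (x * y ^ m) := by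
  induction m with
  | zero => simp
  | succ m ih =>
    rw [pow_succ, mul_assoc, h, mul_smul_comm, ← mul_assoc, ih, smul_mul_assoc, smul_smul,
      mul_assoc, mul_comm s (s ^ m), ← pow_succ]

/-- The basic "weighted shift" operator on `(ℤ × ℤ × ℤ) →₀ k`. -/
noncomputable def jop (f : ℤ × ℤ × ℤ → k) (d : ℤ × ℤ × ℤ) :
    ((ℤ × ℤ × ℤ) →₀ k) →ₗ[k] ((ℤ × ℤ × ℤ) →₀ k) :=
  Finsupp.lsum k fun m => f m • Finsupp.lsingle (m + d)

lemma jop_single (f : ℤ × ℤ × ℤ → k) (d m : ℤ × ℤ × ℤ) (x : k) :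
    jop f d (Finsupp.single m x) = f m • Finsupp.single (m + d) x := by
  simp [jop, Finsupp.smul_single]

lemma jop_mul_jop (f g : ℤ × ℤ × ℤ → k) (d e : ℤ × ℤ × ℤ) :
    jop f d * jop g e = jop (fun m => g m * f (m + e)) (e + d) := by
  apply Finsupp.lhom_ext
  intro m x
  rw [Module.End.mul_apply, jop_single, map_smul, jop_single, jop_single, smul_smul, add_assoc]

lemma smul_jop (s : k) (f : ℤ × ℤ × ℤ → k) (d : ℤ × ℤ × ℤ) :
    s • jop f d = jop (fun m => s * f m) d := by
  apply Finsupp.lhom_ext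
  intro m x
  rw [LinearMap.smul_apply, jop_single, jop_single, smul_smul]

lemma jop_eq_jop {f g : ℤ × ℤ × ℤ → k} {d e : ℤ × ℤ × ℤ} (h : ∀ m, f m = g m) (hd : d = e) :
    jop f d = jop g e := by
  rw [funext h, hd]

/-- The generators of the representation of `𝒥₀(r)` on `(ℤ × ℤ × ℤ) →₀ k`. -/
noncomputable def jE (q : k) : Fin 3 → Module.End k ((ℤ × ℤ × ℤ) →₀ k) :=
  ![jop (fun m => q ^ (m.2.1 - m.2.2)) (1, 0, 0),
    jop (fun _ => 1) (0, 1, 0),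
    jop (fun m => q ^ (2 * m.2.1)) (0, 0, 1)]

/-- The representation of the free algebra. -/
noncomputable def jrep (ζ : k) (r : ℤ) :
    FreeAlgebra k (Fin 3) →ₐ[k] Module.End k ((ℤ × ℤ × ℤ) →₀ k) :=
  FreeAlgebra.lift k (jE (ζ ^ r))

lemma jrep_rel (ζ : k) (hζ0 : ζ ≠ 0) (r : ℤ) :
    ∀ ⦃u v⦄, JacksonRel k ζ r 0 u v → jrep ζ r u = jrep ζ r v := by
  have hq0 : (ζ ^ r) ≠ 0 := zpow_ne_zero _ hζ0
  intro u v h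
  cases h with
  | r01 =>
    simp only [map_mul, map_smul, jrep, FreeAlgebra.lift_ι_apply, jE,
      Matrix.cons_val_zero, Matrix.cons_val_one, Matrix.head_cons, Matrix.cons_val_two,
      Matrix.tail_cons]
    rw [jop_mul_jop, jop_mul_jop, smul_jop]
    apply jop_eq_jop
    · intro m
      simp only [Prod.fst_add, Prod.snd_add, one_mul, mul_one, ← zpow_mul, ← zpow_add₀ hζ0]
      congr 1
      ring
    · simp [Prod.ext_iff]
  | r20 =>
    simp only [map_mul, map_smul, jrep, FreeAlgebra.lift_ι_apply, jE,
      Matrix.cons_val_zero, Matrix.cons_val_one, Matrix.head_cons, Matrix.cons_val_two,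
      Matrix.tail_cons]
    rw [jop_mul_jop, jop_mul_jop, smul_jop]
    apply jop_eq_jop
    · intro m
      simp only [Prod.fst_add, Prod.snd_add, one_mul, mul_one, ← zpow_mul, ← zpow_add₀ hζ0]
      congr 1
      ring
    · simp [Prod.ext_iff]
  | r21 =>
    simp only [map_mul, map_smul, map_add, map_one, jrep, FreeAlgebra.lift_ι_apply, jE,
      Matrix.cons_val_zero, Matrix.cons_val_one, Matrix.head_cons, Matrix.cons_val_two,
      Matrix.tail_cons, zero_smul, zero_mul, add_zero]
    rw [jop_mul_jop, jop_mul_jop, smul_jop]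
    apply jop_eq_jop
    · intro m
      simp only [Prod.fst_add, Prod.snd_add, one_mul, mul_one, ← zpow_mul, ← zpow_add₀ hζ0]
      congr 1
      ring
    · simp [Prod.ext_iff]

lemma jE0_pow (q : k) (hq : q ≠ 0) (a : ℕ) (m : ℤ × ℤ × ℤ) (x : k) :
    ((jop (fun m => q ^ (m.2.1 - m.2.2)) ((1 : ℤ), (0 : ℤ), (0 : ℤ))) ^ a) (Finsupp.single m x)
      = q ^ ((a : ℤ) * (m.2.1 - m.2.2)) • Finsupp.single (m + ((a : ℤ), 0, 0)) x := by
  induction a with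
  | zero =>
    simp
    congr 1
    ext <;> simp
  | succ a ih =>
    rw [pow_succ', Module.End.mul_apply, ih, map_smul, jop_single, smul_smul]
    congr 1
    · rw [← zpow_add₀ hq]
      congr 1
      simp only [Prod.fst_add, Prod.snd_add]
      push_cast
      ring
    · congr 1
      simp only [Prod.ext_iff, Prod.fst_add, Prod.snd_add]
      push_cast
      refine ⟨by ring, by ring, by ring⟩

lemma jE1_pow (b : ℕ) (m : ℤ × ℤ × ℤ) (x : k) :
    ((jop (fun _ => (1 : k)) ((0 : ℤ), (1 : ℤ), (0 : ℤ))) ^ b) (Finsupp.single m x)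
      = Finsupp.single (m + (0, (b : ℤ), 0)) x := by
  induction b with
  | zero =>
    simp
    congr 1
    ext <;> simp
  | succ b ih =>
    rw [pow_succ', Module.End.mul_apply, ih, jop_single, one_smul]
    congr 1
    simp only [Prod.ext_iff, Prod.fst_add, Prod.snd_add]
    push_cast
    refine ⟨by ring, by ring, by ring⟩

lemma jE2_pow (q : k) (hq : q ≠ 0) (c : ℕ) (m : ℤ × ℤ × ℤ) (x : k) :
    ((jop (fun m => q ^ (2 * m.2.1)) ((0 : ℤ), (0 : ℤ), (1 : ℤ))) ^ c) (Finsupp.single m x)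
      = q ^ ((c : ℤ) * (2 * m.2.1)) • Finsupp.single (m + (0, 0, (c : ℤ))) x := by
  induction c with
  | zero =>
    simp
    congr 1
    ext <;> simp
  | succ c ih =>
    rw [pow_succ', Module.End.mul_apply, ih, map_smul, jop_single, smul_smul]
    congr 1
    · rw [← zpow_add₀ hq]
      congr 1
      simp only [Prod.fst_add, Prod.snd_add]
      push_cast
      ring
    · congr 1
      simp only [Prod.ext_iff, Prod.fst_add, Prod.snd_add]
      push_cast
      refine ⟨by ring, by ring, by ring⟩

end Aux

/-- Let `k` be a field, `n ≥ 2`, `ζ ∈ k` a primitive `n`-th root of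
unity, and `r` an integer such that `ζ^r` is again a primitive `n`-th root of unity.
In the Jackson algebra `𝒥₀(r)` (the case `x = 0`), a monomial `e₀^a e₁^b e₂^c` lies
in the centre if and only if `n ∣ r (a + 2b)` and `n ∣ r (b − c)`. -/
theorem jackson_monomial_mem_center_iff (k : Type*) [Field k] (n : ℕ) (hn : 2 ≤ n)
    (ζ : k) (hζ : IsPrimitiveRoot ζ n) (r : ℤ) (hr : IsPrimitiveRoot (ζ ^ r) n)
    (a b c : ℕ) :
    JacksonGen k ζ r 0 0 ^ a * JacksonGen k ζ r 0 1 ^ b * JacksonGen k ζ r 0 2 ^ c ∈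
        Subalgebra.center k (Jackson k ζ r 0) ↔
      (n : ℤ) ∣ r * ((a : ℤ) + 2 * b) ∧ (n : ℤ) ∣ r * ((b : ℤ) - (c : ℤ)) := by
  classical
  have hn0 : n ≠ 0 := by omega
  have hζ0 : ζ ≠ 0 := hζ.ne_zero hn0
  set q : k := ζ ^ r with hq_def
  have hq0 : q ≠ 0 := zpow_ne_zero _ hζ0
  set E : Fin 3 → Jackson k ζ r 0 := JacksonGen k ζ r 0 with hE_def
  -- the defining relations, in the quotient
  have h01 : E 0 * E 1 = q • (E 1 * E 0) := by
    have h := RingQuot.mkAlgHom_rel k (JacksonRel.r01 (k := k) (ζ := ζ) (r := r) (x := (0 : k)))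
    simpa only [hE_def, JacksonGen, map_mul, map_smul, hq_def] using h
  have h20 : E 2 * E 0 = q • (E 0 * E 2) := by
    have h := RingQuot.mkAlgHom_rel k (JacksonRel.r20 (k := k) (ζ := ζ) (r := r) (x := (0 : k)))
    simpa only [hE_def, JacksonGen, map_mul, map_smul, hq_def] using h
  have hq2 : ζ ^ (2 * r) = q ^ (2 : ℕ) := by
    rw [hq_def, ← zpow_natCast (ζ ^ r) 2, ← zpow_mul]
    congr 1
    push_cast
    ring
  have h21 : E 2 * E 1 = (q ^ (2 : ℕ)) • (E 1 * E 2) := by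
    have h := RingQuot.mkAlgHom_rel k (JacksonRel.r21 (k := k) (ζ := ζ) (r := r) (x := (0 : k)))
    simpa only [hE_def, JacksonGen, map_mul, map_smul, map_add, map_one, zero_smul, zero_mul,
      add_zero, hq2] using h
  -- scalar helper
  have hqq : ∀ s t : ℕ, (n : ℤ) ∣ r * ((s : ℤ) - t) → q ^ s = q ^ t := by
    intro s t hdvd
    have h1 : ζ ^ (r * ((s : ℤ) - t)) = 1 := (hζ.zpow_eq_one_iff_dvd _).2 hdvd
    have h2 : q ^ (s : ℤ) = q ^ (t : ℤ) * ζ ^ (r * ((s : ℤ) - t)) := by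
      rw [hq_def, ← zpow_mul, ← zpow_mul, ← zpow_add₀ hζ0]
      congr 1
      ring
    rw [← zpow_natCast q s, ← zpow_natCast q t, h2, h1, mul_one]
  constructor
  · intro hm
    have hmc := Subalgebra.mem_center_iff.1 hm
    set Φ : Jackson k ζ r 0 →ₐ[k] Module.End k ((ℤ × ℤ × ℤ) →₀ k) :=
      RingQuot.liftAlgHom k ⟨jrep ζ r, jrep_rel ζ hζ0 r⟩ with hΦ_def
    have hΦ : ∀ i, Φ (E i) = jE q i := by
      intro i
      rw [hE_def, hΦ_def]
      show RingQuot.liftAlgHom k ⟨jrep ζ r, jrep_rel ζ hζ0 r⟩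
          (RingQuot.mkAlgHom k (JacksonRel k ζ r 0) (FreeAlgebra.ι k i)) = _
      rw [RingQuot.liftAlgHom_mkAlgHom_apply]
      simp only [jrep, FreeAlgebra.lift_ι_apply, hq_def]
    have hjE0 : jE q 0 = jop (fun m => q ^ (m.2.1 - m.2.2)) (1, 0, 0) := rfl
    have hjE1 : jE q 1 = jop (fun _ => (1 : k)) (0, 1, 0) := rfl
    have hjE2 : jE q 2 = jop (fun m => q ^ (2 * m.2.1)) (0, 0, 1) := rfl
    have hFm : ∀ p : ℤ × ℤ × ℤ,
        (jE q 0 ^ a) ((jE q 1 ^ b) ((jE q 2 ^ c) (Finsupp.single p 1)))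
          = (q ^ ((c : ℤ) * (2 * p.2.1)) *
              q ^ ((a : ℤ) * (p.2.1 + (b : ℤ) - (p.2.2 + (c : ℤ))))) •
              Finsupp.single (p + ((a : ℤ), (b : ℤ), (c : ℤ))) 1 := by
      intro p
      rw [hjE0, hjE1, hjE2, jE2_pow q hq0, map_smul, jE1_pow, map_smul, jE0_pow q hq0, smul_smul]
      congr 1
      · rw [← zpow_add₀ hq0, ← zpow_add₀ hq0]
        congr 1
        simp only [Prod.fst_add, Prod.snd_add]
        ring
      · congr 1
        simp only [Prod.ext_iff, Prod.fst_add, Prod.snd_add]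
        refine ⟨by ring, by ring, by ring⟩
    have hinner2 : jE q 2 (Finsupp.single (0 : ℤ × ℤ × ℤ) 1)
        = Finsupp.single ((0 : ℤ), (0 : ℤ), (1 : ℤ)) 1 := by
      rw [hjE2, jop_single]
      norm_num
    have hinner0 : jE q 0 (Finsupp.single (0 : ℤ × ℤ × ℤ) 1)
        = Finsupp.single ((1 : ℤ), (0 : ℤ), (0 : ℤ)) 1 := by
      rw [hjE0, jop_single]
      norm_num
    -- the relation coming from commutation with `e₂`
    have h2 : jE q 2 * (jE q 0 ^ a * jE q 1 ^ b * jE q 2 ^ c)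
        = (jE q 0 ^ a * jE q 1 ^ b * jE q 2 ^ c) * jE q 2 := by
      have h := congrArg Φ (hmc (E 2))
      simpa only [map_mul, map_pow, hΦ] using h
    have h2v := DFunLike.congr_fun h2 (Finsupp.single (0 : ℤ × ℤ × ℤ) 1)
    simp only [Module.End.mul_apply] at h2v
    rw [hinner2, hFm, hFm, map_smul, hjE2, jop_single, smul_smul] at h2v
    simp only [Prod.fst_zero, Prod.snd_zero, Prod.fst_add, Prod.snd_add, Prod.mk_add_mk,
      zero_add, add_zero, mul_zero, zero_mul, zpow_zero, one_mul, mul_one, zero_sub,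
      sub_zero] at h2v
    -- the relation coming from commutation with `e₀`
    have h0 : jE q 0 * (jE q 0 ^ a * jE q 1 ^ b * jE q 2 ^ c)
        = (jE q 0 ^ a * jE q 1 ^ b * jE q 2 ^ c) * jE q 0 := by
      have h := congrArg Φ (hmc (E 0))
      simpa only [map_mul, map_pow, hΦ] using h
    have h0v := DFunLike.congr_fun h0 (Finsupp.single (0 : ℤ × ℤ × ℤ) 1)
    simp only [Module.End.mul_apply] at h0v
    rw [hinner0, hFm, hFm, map_smul, hjE0, jop_single, smul_smul] at h0v
    simp only [Prod.fst_zero, Prod.snd_zero, Prod.fst_add, Prod.snd_add, Prod.mk_add_mk,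
      zero_add, add_zero, mul_zero, zero_mul, zpow_zero, one_mul, mul_one, zero_sub,
      sub_zero] at h0v
    rw [show (1 + (c : ℤ)) = (c : ℤ) + 1 from add_comm 1 (c : ℤ)] at h2v
    rw [show (1 + (a : ℤ)) = (a : ℤ) + 1 from add_comm 1 (a : ℤ)] at h0v
    have hval2 := congrArg (fun v => v ((a : ℤ), (b : ℤ), (c : ℤ) + 1)) h2v
    simp only [Finsupp.smul_apply, Finsupp.single_eq_same, smul_eq_mul, mul_one] at hval2
    have hval0 := congrArg (fun v => v ((a : ℤ) + 1, (b : ℤ), (c : ℤ))) h0v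
    simp only [Finsupp.smul_apply, Finsupp.single_eq_same, smul_eq_mul, mul_one] at hval0
    have h1 : q ^ ((a : ℤ) + 2 * b) = 1 := by
      have e : q ^ ((a : ℤ) * ((b : ℤ) - c) + 2 * b) = q ^ ((a : ℤ) * ((b : ℤ) - ((c : ℤ) + 1))) := by
        rw [zpow_add₀ hq0]
        exact hval2
      have e2 : q ^ ((a : ℤ) + 2 * b)
          = q ^ ((a : ℤ) * ((b : ℤ) - c) + 2 * b) / q ^ ((a : ℤ) * ((b : ℤ) - ((c : ℤ) + 1))) := by
        rw [← zpow_sub₀ hq0]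
        congr 1
        ring
      rw [e2, e, div_self (zpow_ne_zero _ hq0)]
    have h2' : q ^ ((b : ℤ) - c) = 1 := by
      have e : q ^ ((a : ℤ) * ((b : ℤ) - c) + ((b : ℤ) - c)) = q ^ ((a : ℤ) * ((b : ℤ) - c)) := by
        rw [zpow_add₀ hq0]
        exact hval0
      have e2 : q ^ ((b : ℤ) - c)
          = q ^ ((a : ℤ) * ((b : ℤ) - c) + ((b : ℤ) - c)) / q ^ ((a : ℤ) * ((b : ℤ) - c)) := by
        rw [← zpow_sub₀ hq0]
        congr 1
        ring
      rw [e2, e, div_self (zpow_ne_zero _ hq0)]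
    exact ⟨Dvd.dvd.mul_left ((hr.zpow_eq_one_iff_dvd _).1 h1) r,
      Dvd.dvd.mul_left ((hr.zpow_eq_one_iff_dvd _).1 h2') r⟩
  · rintro ⟨hd1, hd2⟩
    -- scalar identities from the divisibility hypotheses
    have hq_cb : q ^ c = q ^ b := by
      refine hqq c b ?_
      rw [show r * ((c : ℤ) - b) = -(r * ((b : ℤ) - c)) by ring]
      exact dvd_neg.mpr hd2
    have hq_a2c : q ^ (a + 2 * c) = 1 := by
      have h := hqq (a + 2 * c) 0 ?_
      · simpa using h
      · rw [show r * (((a + 2 * c : ℕ) : ℤ) - (0 : ℕ)) =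
            r * ((a : ℤ) + 2 * b) - 2 * (r * ((b : ℤ) - c)) by push_cast; ring]
        exact dvd_sub hd1 (Dvd.dvd.mul_left hd2 2)
    have hq_a2b : q ^ (a + 2 * b) = 1 := by
      have h := hqq (a + 2 * b) 0 ?_
      · simpa using h
      · rw [show r * (((a + 2 * b : ℕ) : ℤ) - (0 : ℕ)) = r * ((a : ℤ) + 2 * b) by push_cast; ring]
        exact hd1
    set W : Jackson k ζ r 0 := E 0 ^ a * E 1 ^ b * E 2 ^ c with hW_def
    -- commutation with the generators
    have l1 : E 2 ^ c * E 0 = q ^ c • (E 0 * E 2 ^ c) := qcomm_pow_right h20 c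
    have l2 : E 0 * E 1 ^ b = q ^ b • (E 1 ^ b * E 0) := qcomm_pow_left h01 b
    have l3 : E 2 ^ c * E 1 = (q ^ (2 : ℕ)) ^ c • (E 1 * E 2 ^ c) := qcomm_pow_right h21 c
    have l4 : E 0 ^ a * E 1 = q ^ a • (E 1 * E 0 ^ a) := qcomm_pow_right h01 a
    have l5 : E 2 * E 0 ^ a = q ^ a • (E 0 ^ a * E 2) := qcomm_pow_left h20 a
    have l6 : E 2 * E 1 ^ b = (q ^ (2 : ℕ)) ^ b • (E 1 ^ b * E 2) := qcomm_pow_left h21 b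
    have hc0 : W * E 0 = E 0 * W := by
      have e1 : W * E 0 = q ^ c • (E 0 ^ a * ((E 1 ^ b * E 0) * E 2 ^ c)) := by
        rw [hW_def, mul_assoc, l1, mul_smul_comm]
        congr 1
        noncomm_ring
      have e2 : E 0 * W = q ^ b • (E 0 ^ a * ((E 1 ^ b * E 0) * E 2 ^ c)) := by
        have e3 : E 0 * W = E 0 ^ a * ((E 0 * E 1 ^ b) * E 2 ^ c) := by
          rw [hW_def, ← mul_assoc, ← mul_assoc, ← pow_mul_comm']
          noncomm_ring
        rw [e3, l2, smul_mul_assoc, mul_smul_comm]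
      rw [e1, e2, hq_cb]
    have hc1 : W * E 1 = E 1 * W := by
      have e1 : q ^ a • (W * E 1) = (q ^ a * (q ^ (2 : ℕ)) ^ c) •
          (E 0 ^ a * ((E 1 * E 1 ^ b) * E 2 ^ c)) := by
        rw [hW_def, mul_assoc, l3, mul_smul_comm, smul_smul]
        congr 1
        rw [← pow_mul_comm']
        noncomm_ring
      have e2 : q ^ a • (E 1 * W) = E 0 ^ a * ((E 1 * E 1 ^ b) * E 2 ^ c) := by
        rw [hW_def, ← mul_assoc, ← mul_assoc, ← smul_mul_assoc, ← smul_mul_assoc, ← l4]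
        noncomm_ring
      have e3 : q ^ a * (q ^ (2 : ℕ)) ^ c = 1 := by
        rw [← pow_mul, ← pow_add, hq_a2c]
      refine smul_right_injective _ (pow_ne_zero a hq0)
        (show q ^ a • (W * E 1) = q ^ a • (E 1 * W) from ?_)
      rw [e1, e2, e3, one_smul]
    have hc2 : W * E 2 = E 2 * W := by
      have e1 : W * E 2 = E 0 ^ a * (E 1 ^ b * (E 2 * E 2 ^ c)) := by
        rw [hW_def, mul_assoc, pow_mul_comm']
        noncomm_ring
      have e2 : E 2 * W = (q ^ a * (q ^ (2 : ℕ)) ^ b) •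
          (E 0 ^ a * (E 1 ^ b * (E 2 * E 2 ^ c))) := by
        rw [hW_def, ← mul_assoc, ← mul_assoc, l5, smul_mul_assoc, smul_mul_assoc,
          mul_assoc (E 0 ^ a), l6]
        simp only [smul_mul_assoc, mul_smul_comm, smul_smul]
        congr 1
        noncomm_ring
      have e3 : q ^ a * (q ^ (2 : ℕ)) ^ b = 1 := by
        rw [← pow_mul, ← pow_add, hq_a2b]
      rw [e1, e2, e3, one_smul]
    -- the algebra is generated by the generators
    have htop : Algebra.adjoin k (Set.range E) = ⊤ := by
      have hrange : Set.range E =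
          (RingQuot.mkAlgHom k (JacksonRel k ζ r 0)) '' (Set.range (FreeAlgebra.ι k)) := by
        rw [← Set.range_comp]
        rfl
      rw [hrange, ← AlgHom.map_adjoin, FreeAlgebra.adjoin_range_ι, Algebra.map_top]
      exact (AlgHom.range_eq_top _).mpr (RingQuot.mkAlgHom_surjective k _)
    rw [Subalgebra.mem_center_iff]
    intro y
    have hy : y ∈ Algebra.adjoin k (Set.range E) := by rw [htop]; exact Algebra.mem_top
    induction hy using Algebra.adjoin_induction with
    | mem z hz =>
      obtain ⟨i, rfl⟩ := hz
      fin_cases i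
      · exact hc0.symm
      · exact hc1.symm
      · exact hc2.symm
    | algebraMap s => exact Algebra.commutes s W
    | add u v hu hv ihu ihv => rw [add_mul, mul_add, ihu, ihv]
    | mul u v hu hv ihu ihv => rw [mul_assoc, ihv, ← mul_assoc, ihu, mul_assoc]
end

section
/- Let k be a field, n ≥ 2 an integer, ζ ∈ k a primitive n-th root of unity, r an integer such that ζ^r is again a primitive n-th root of unity, and x ∈ k. Let l be the least positive integer such that n divides l·r. Then the elements e₀^l, e₁^l, e₂^l of the Jackson algebra 𝒥_x(r) are central, i.e. the commutative subalgebra k[e₀^l, e₁^l, e₂^l] is contained in the centre of 𝒥_x(r). -/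
/-! Write `u = ζ ^ r`, so that `u ^ l = 1` and `u ≠ 1`. In any algebra
`aᵐ b - qᵐ b aᵐ = ∑_{i<m} qⁱ a^{m-1-i} (a b - q b a) aⁱ`.
For the `u`-commuting pairs `(e₀, e₁)`, `(e₂, e₀)` the twisted commutator vanishes and `uˡ = 1`.
For `e₂ˡ` and `e₁` it is `x e₀ + x (1 - u²)`; moving `e₀` past powers of `e₂` costs powers of `u`,
so the sum becomes `x (∑_{i<l} u²ⁱ u^{l-1-i}) e₀ e₂^{l-1} + x (1 - u²) (∑_{i<l} u²ⁱ) e₂^{l-1}`,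
and both geometric sums are killed by `uˡ = 1 ≠ u`. Commutation of `e₁ˡ` with `e₂` is the same
computation in the opposite algebra, and commuting with the generators means being central. -/

open Finset

section TwistedCommutation

variable {R A : Type*} [CommRing R] [Ring A] [Algebra R A]

theorem pow_mul_sub_smul_mul_pow (a b : A) (q : R) (m : ℕ) :
    a ^ m * b - q ^ m • (b * a ^ m) =
      ∑ i ∈ range m, q ^ i • (a ^ (m - 1 - i) * (a * b - q • (b * a)) * a ^ i) := by
  induction m with
  | zero => simp
  | succ m ih =>
    have hsucc : a ^ (m + 1) * b - q ^ (m + 1) • (b * a ^ (m + 1)) =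
        a * (a ^ m * b - q ^ m • (b * a ^ m)) + q ^ m • ((a * b - q • (b * a)) * a ^ m) := by
      simp only [mul_sub, sub_mul, mul_smul_comm, smul_mul_assoc, pow_succ' a, mul_assoc]
      module
    rw [hsucc, ih, mul_sum, sum_range_succ]
    congr 1
    · refine sum_congr rfl fun i hi => ?_
      have him : m - i = m - 1 - i + 1 := by have := mem_range.mp hi; omega
      rw [mul_smul_comm, ← mul_assoc, ← mul_assoc, ← pow_succ', Nat.add_sub_cancel, ← him]
    · simp

theorem pow_mul_eq_smul_mul_pow_of_mul_eq_smul {a b : A} {q : R} (h : a * b = q • (b * a))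
    (m : ℕ) : a ^ m * b = q ^ m • (b * a ^ m) := by
  rw [← sub_eq_zero, pow_mul_sub_smul_mul_pow, h, sub_self]
  simp

theorem sum_smul_pow_mul_mul_pow_of_mul_eq_smul {a w : A} {p : R} (h : a * w = p • (w * a))
    (q : R) (m : ℕ) :
    ∑ i ∈ range m, q ^ i • (a ^ (m - 1 - i) * w * a ^ i) =
      (∑ i ∈ range m, q ^ i * p ^ (m - 1 - i)) • (w * a ^ (m - 1)) := by
  rw [sum_smul]
  refine sum_congr rfl fun i hi => ?_
  have him : m - 1 - i + i = m - 1 := by have := mem_range.mp hi; omega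
  rw [pow_mul_eq_smul_mul_pow_of_mul_eq_smul h, smul_mul_assoc, mul_assoc, ← pow_add, him,
    smul_smul]

theorem pow_mul_eq_of_mul_eq_smul_add {a b w : A} {q p x c : R}
    (hab : a * b = q • (b * a) + x • w + c • 1) (haw : a * w = p • (w * a)) (m : ℕ) :
    a ^ m * b = q ^ m • (b * a ^ m) +
      (x * ∑ i ∈ range m, q ^ i * p ^ (m - 1 - i)) • (w * a ^ (m - 1)) +
        (c * ∑ i ∈ range m, q ^ i) • a ^ (m - 1) := by
  have hab' : a * b - q • (b * a) = x • w + c • (1 : A) := by rw [hab]; abel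
  have hsplit : ∀ i, q ^ i • (a ^ (m - 1 - i) * (x • w + c • (1 : A)) * a ^ i) =
      x • (q ^ i • (a ^ (m - 1 - i) * w * a ^ i)) +
        c • (q ^ i • (a ^ (m - 1 - i) * 1 * a ^ i)) := by
    intro i
    simp only [mul_add, add_mul, mul_smul_comm, smul_mul_assoc, smul_add]
    rw [smul_comm (q ^ i) x, smul_comm (q ^ i) c]
  rw [add_assoc, ← sub_eq_iff_eq_add', pow_mul_sub_smul_mul_pow, hab']
  simp only [hsplit, sum_add_distrib, ← smul_sum, sum_smul_pow_mul_mul_pow_of_mul_eq_smul haw,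
    sum_smul_pow_mul_mul_pow_of_mul_eq_smul (show a * 1 = (1 : R) • (1 * a) by simp)]
  simp [smul_smul]

theorem commute_pow_left_of_mul_eq_smul {a b : A} {q : R} {m : ℕ} (h : a * b = q • (b * a))
    (hq : q ^ m = 1) : Commute (a ^ m) b := by
  rw [Commute, SemiconjBy, pow_mul_eq_smul_mul_pow_of_mul_eq_smul h, hq, one_smul]

theorem commute_pow_right_of_mul_eq_smul {a b : A} {q : R} {m : ℕ} (h : a * b = q • (b * a))
    (hq : q ^ m = 1) : Commute a (b ^ m) := by
  have hop : MulOpposite.op b * MulOpposite.op a = q • (MulOpposite.op a * MulOpposite.op b) := by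
    rw [← MulOpposite.op_mul, h, MulOpposite.op_smul, MulOpposite.op_mul]
  simpa using (commute_pow_left_of_mul_eq_smul hop hq).unop.symm

theorem sum_sq_pow_mul_pow_eq_zero [IsDomain R] {u : R} {m : ℕ} (hum : u ^ m = 1) (hu : u ≠ 1) :
    ∑ i ∈ range m, (u ^ 2) ^ i * u ^ (m - 1 - i) = 0 := by
  rcases eq_or_ne m 0 with rfl | hm
  · simp
  have hu0 : u ≠ 0 := (IsUnit.of_pow_eq_one hum hm).ne_zero
  have hsq : u ^ 2 - u ≠ 0 := by
    rw [sq, ← mul_sub_one]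
    exact mul_ne_zero hu0 (sub_ne_zero.mpr hu)
  refine (mul_eq_zero.mp ?_).resolve_right hsq
  rw [geom_sum₂_mul, ← pow_mul, mul_comm 2 m, pow_mul, hum, one_pow, sub_self]

theorem one_sub_sq_mul_sum_sq_pow_eq_zero {u : R} {m : ℕ} (hum : u ^ m = 1) :
    (1 - u ^ 2) * ∑ i ∈ range m, (u ^ 2) ^ i = 0 := by
  have h := geom_sum_mul (u ^ 2) m
  rw [← pow_mul, mul_comm 2 m, pow_mul, hum, one_pow, sub_self] at h
  linear_combination -h

theorem commute_pow_left_of_mul_eq_sq_smul_add [IsDomain R] {a b w : A} {u x : R} {m : ℕ}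
    (hab : a * b = u ^ 2 • (b * a) + x • w + (x * (1 - u ^ 2)) • 1)
    (haw : a * w = u • (w * a)) (hum : u ^ m = 1) (hu : u ≠ 1) : Commute (a ^ m) b := by
  rw [Commute, SemiconjBy, pow_mul_eq_of_mul_eq_smul_add hab haw,
    sum_sq_pow_mul_pow_eq_zero hum hu, mul_assoc, one_sub_sq_mul_sum_sq_pow_eq_zero hum,
    ← pow_mul, mul_comm, pow_mul, hum, one_pow]
  simp

theorem commute_pow_right_of_mul_eq_sq_smul_add [IsDomain R] {a b w : A} {u x : R} {m : ℕ}
    (hab : a * b = u ^ 2 • (b * a) + x • w + (x * (1 - u ^ 2)) • 1)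
    (hwb : w * b = u • (b * w)) (hum : u ^ m = 1) (hu : u ≠ 1) : Commute a (b ^ m) := by
  have hop : MulOpposite.op b * MulOpposite.op a =
      u ^ 2 • (MulOpposite.op a * MulOpposite.op b) + x • MulOpposite.op w +
        (x * (1 - u ^ 2)) • 1 := by
    rw [← MulOpposite.op_mul, hab]
    simp
  have hopw : MulOpposite.op b * MulOpposite.op w =
      u • (MulOpposite.op w * MulOpposite.op b) := by
    rw [← MulOpposite.op_mul, hwb, MulOpposite.op_smul, MulOpposite.op_mul]
  simpa using (commute_pow_left_of_mul_eq_sq_smul_add hop hopw hum hu).unop.symm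

end TwistedCommutation

section JacksonAlgebra

variable (k : Type*) [Field k] (ζ : k) (r : ℤ) (x : k)

theorem jacksonGen_zero_mul_one :
    JacksonGen k ζ r x 0 * JacksonGen k ζ r x 1 =
      ζ ^ r • (JacksonGen k ζ r x 1 * JacksonGen k ζ r x 0) := by
  simpa only [JacksonGen, map_mul, map_smul] using
    RingQuot.mkAlgHom_rel k (JacksonRel.r01 (k := k) (ζ := ζ) (r := r) (x := x))

theorem jacksonGen_two_mul_zero :
    JacksonGen k ζ r x 2 * JacksonGen k ζ r x 0 =
      ζ ^ r • (JacksonGen k ζ r x 0 * JacksonGen k ζ r x 2) := by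
  simpa only [JacksonGen, map_mul, map_smul] using
    RingQuot.mkAlgHom_rel k (JacksonRel.r20 (k := k) (ζ := ζ) (r := r) (x := x))

theorem jacksonGen_two_mul_one :
    JacksonGen k ζ r x 2 * JacksonGen k ζ r x 1 =
      (ζ ^ r) ^ 2 • (JacksonGen k ζ r x 1 * JacksonGen k ζ r x 2) + x • JacksonGen k ζ r x 0 +
        (x * (1 - (ζ ^ r) ^ 2)) • 1 := by
  have h := RingQuot.mkAlgHom_rel k (JacksonRel.r21 (k := k) (ζ := ζ) (r := r) (x := x))
  rw [mul_comm 2 r, zpow_mul, zpow_ofNat] at h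
  simpa only [JacksonGen, map_mul, map_add, map_smul, map_one] using h

theorem adjoin_range_jacksonGen : Algebra.adjoin k (Set.range (JacksonGen k ζ r x)) = ⊤ := by
  rw [show JacksonGen k ζ r x = RingQuot.mkAlgHom k (JacksonRel k ζ r x) ∘ FreeAlgebra.ι k from rfl,
    Set.range_comp, ← AlgHom.map_adjoin, FreeAlgebra.adjoin_range_ι, Algebra.map_top,
    AlgHom.range_eq_top]
  exact RingQuot.mkAlgHom_surjective k _

variable {k ζ r x} in
theorem mem_center_jackson_of_forall_commute_jacksonGen {z : Jackson k ζ r x}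
    (h : ∀ i, Commute z (JacksonGen k ζ r x i)) : z ∈ Subalgebra.center k (Jackson k ζ r x) := by
  refine Subalgebra.mem_center_iff.mpr fun b => ?_
  have hb : b ∈ Algebra.adjoin k (Set.range (JacksonGen k ζ r x)) := by
    rw [adjoin_range_jacksonGen]; trivial
  have hgen : ∀ y ∈ Set.range (JacksonGen k ζ r x), Commute z y := by
    rintro _ ⟨i, rfl⟩
    exact h i
  exact (Algebra.commute_of_mem_adjoin_of_forall_mem_commute hb hgen).eq.symm

end JacksonAlgebra

theorem jackson_powers_central_general (k : Type*) [Field k] (n : ℕ) (hn : 2 ≤ n)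
    (ζ : k) (hζ : IsPrimitiveRoot ζ n) (r : ℤ) (hr : IsPrimitiveRoot (ζ ^ r) n)
    (x : k) (l : ℕ) (hdvd : (n : ℤ) ∣ (l : ℤ) * r) :
    Algebra.adjoin k
        {JacksonGen k ζ r x 0 ^ l, JacksonGen k ζ r x 1 ^ l, JacksonGen k ζ r x 2 ^ l} ≤
      Subalgebra.center k (Jackson k ζ r x) := by
  have hul : (ζ ^ r) ^ l = 1 := by
    rw [← zpow_natCast, ← zpow_mul, mul_comm, hζ.zpow_eq_one_iff_dvd]
    exact hdvd
  have hu : ζ ^ r ≠ 1 := hr.ne_one (by omega)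
  have h01 := jacksonGen_zero_mul_one k ζ r x
  have h20 := jacksonGen_two_mul_zero k ζ r x
  have h21 := jacksonGen_two_mul_one k ζ r x
  refine Algebra.adjoin_le ?_
  rintro _ (rfl | rfl | rfl) <;>
    refine mem_center_jackson_of_forall_commute_jacksonGen fun i => ?_ <;> fin_cases i
  · exact (Commute.refl _).pow_left l
  · exact commute_pow_left_of_mul_eq_smul h01 hul
  · exact (commute_pow_right_of_mul_eq_smul h20 hul).symm
  · exact (commute_pow_right_of_mul_eq_smul h01 hul).symm
  · exact (Commute.refl _).pow_left l
  · exact (commute_pow_right_of_mul_eq_sq_smul_add h21 h01 hul hu).symm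
  · exact commute_pow_left_of_mul_eq_smul h20 hul
  · exact commute_pow_left_of_mul_eq_sq_smul_add h21 h20 hul hu
  · exact (Commute.refl _).pow_left l

/-- Let `k` be a field, `n ≥ 2`, `ζ ∈ k` a primitive `n`-th root of
unity, `r` an integer such that `ζ^r` is again a primitive `n`-th root of unity,
and `x ∈ k`.  Let `l` be the least positive integer such that `n ∣ l·r`.  Then the
elements `e₀^l, e₁^l, e₂^l` of `𝒥_x(r)` are central: the subalgebra
`k[e₀^l, e₁^l, e₂^l]` is contained in the centre of `𝒥_x(r)`. -/
theorem jackson_powers_central (k : Type*) [Field k] (n : ℕ) (hn : 2 ≤ n)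
    (ζ : k) (hζ : IsPrimitiveRoot ζ n) (r : ℤ) (hr : IsPrimitiveRoot (ζ ^ r) n)
    (x : k) (l : ℕ) (hl : 0 < l) (hdvd : (n : ℤ) ∣ (l : ℤ) * r)
    (hleast : ∀ m : ℕ, 0 < m → (n : ℤ) ∣ (m : ℤ) * r → l ≤ m) :
    Algebra.adjoin k
        {JacksonGen k ζ r x 0 ^ l, JacksonGen k ζ r x 1 ^ l, JacksonGen k ζ r x 2 ^ l} ≤
      Subalgebra.center k (Jackson k ζ r x) :=
  jackson_powers_central_general k n hn ζ hζ r hr x l hdvd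
end

section
/- Let k be a field, n ≥ 2 an integer, ζ ∈ k a primitive n-th root of unity, r an integer such that ζ^r is again a primitive n-th root of unity, and x ∈ k. Let l be the least positive integer such that n divides l·r. Then (i) the Jackson algebra 𝒥_x(r) is finitely generated as a module over its commutative subalgebra generated by e₀^l, e₁^l, e₂^l, and (ii) consequently the centre Z(𝒥_x(r)) is finitely generated as a module over that same subalgebra, so the inclusion k[e₀^l, e₁^l, e₂^l] ⊆ Z(𝒥_x(r)) is a finite ring extension. -/
section JacksonAux

variable {k : Type*} [Field k] {ζ : k} {r : ℤ} {x : k}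

local notation "E" => JacksonGen k ζ r x

theorem Jackson.rel01 : E 0 * E 1 = ζ ^ r • (E 1 * E 0) := by
  have h := RingQuot.mkAlgHom_rel k (JacksonRel.r01 (k := k) (ζ := ζ) (r := r) (x := x))
  simpa only [map_mul, map_smul, JacksonGen] using h

theorem Jackson.rel20 : E 2 * E 0 = ζ ^ r • (E 0 * E 2) := by
  have h := RingQuot.mkAlgHom_rel k (JacksonRel.r20 (k := k) (ζ := ζ) (r := r) (x := x))
  simpa only [map_mul, map_smul, JacksonGen] using h

theorem Jackson.rel21 :
    E 2 * E 1 = (ζ ^ r) ^ 2 • (E 1 * E 2) + x • E 0 + (x * (1 - (ζ ^ r) ^ 2)) • 1 := by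
  have h := RingQuot.mkAlgHom_rel k (JacksonRel.r21 (k := k) (ζ := ζ) (r := r) (x := x))
  have hq : ζ ^ (2 * r) = (ζ ^ r) ^ 2 := by rw [mul_comm, zpow_mul, zpow_two, sq]
  simpa only [map_mul, map_smul, map_add, map_one, JacksonGen, hq] using h

open Jackson in
theorem Jackson.e0_mul_e1_pow (m : ℕ) : E 0 * E 1 ^ m = (ζ ^ r) ^ m • (E 1 ^ m * E 0) := by
  induction m with
  | zero => simp
  | succ m ih =>
    rw [pow_succ, ← mul_assoc, ih, smul_mul_assoc, mul_assoc, rel01, mul_smul_comm, smul_smul]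
    simp only [pow_succ, mul_assoc]

open Jackson in
theorem Jackson.e2_mul_e0_pow (m : ℕ) : E 2 * E 0 ^ m = (ζ ^ r) ^ m • (E 0 ^ m * E 2) := by
  induction m with
  | zero => simp
  | succ m ih =>
    rw [pow_succ, ← mul_assoc, ih, smul_mul_assoc, mul_assoc, rel20, mul_smul_comm, smul_smul]
    simp only [pow_succ, mul_assoc]

open Jackson in
theorem Jackson.e0_pow_mul_e1 (m : ℕ) : E 0 ^ m * E 1 = (ζ ^ r) ^ m • (E 1 * E 0 ^ m) := by
  induction m with
  | zero => simp
  | succ m ih =>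
    rw [pow_succ, mul_assoc, rel01, mul_smul_comm, ← mul_assoc, ih, smul_mul_assoc, smul_smul]
    simp only [pow_succ, mul_assoc]
    match_scalars
    ring

open Jackson in
theorem Jackson.e2_pow_mul_e0 (m : ℕ) : E 2 ^ m * E 0 = (ζ ^ r) ^ m • (E 0 * E 2 ^ m) := by
  induction m with
  | zero => simp
  | succ m ih =>
    rw [pow_succ', mul_assoc, ih, mul_smul_comm, ← mul_assoc, rel20, smul_mul_assoc, smul_smul]
    simp only [pow_succ', mul_assoc]
    match_scalars
    ring

open Jackson in
theorem Jackson.e2_mul_e1_pow (m : ℕ) :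
    E 2 * E 1 ^ (m + 1) = (ζ ^ r) ^ (2 * (m + 1)) • (E 1 ^ (m + 1) * E 2)
      + (x * (ζ ^ r) ^ m * ∑ i ∈ Finset.range (m + 1), (ζ ^ r) ^ i) • (E 1 ^ m * E 0)
      + (x * (1 - (ζ ^ r) ^ (2 * (m + 1)))) • E 1 ^ m := by
  induction m with
  | zero => simpa using rel21
  | succ m ih =>
    have h1 : E 2 * E 1 ^ (m + 2) = (E 2 * E 1 ^ (m + 1)) * E 1 := by rw [pow_succ, mul_assoc]
    rw [h1, ih, geom_sum_succ' (x := ζ ^ r) (n := m + 1)]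
    simp only [add_mul, smul_mul_assoc, mul_assoc, rel01, rel21, one_mul]
    simp only [mul_add, smul_add, mul_smul_comm, smul_smul, mul_one]
    simp only [pow_succ, mul_assoc]
    match_scalars <;> ring

open Jackson in
theorem Jackson.e2_pow_mul_e1 (m : ℕ) :
    E 2 ^ (m + 1) * E 1 = (ζ ^ r) ^ (2 * (m + 1)) • (E 1 * E 2 ^ (m + 1))
      + (x * (ζ ^ r) ^ m * ∑ i ∈ Finset.range (m + 1), (ζ ^ r) ^ i) • (E 0 * E 2 ^ m)
      + (x * (1 - (ζ ^ r) ^ (2 * (m + 1)))) • E 2 ^ m := by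
  induction m with
  | zero => simpa using rel21
  | succ m ih =>
    have h1 : E 2 ^ (m + 2) * E 1 = E 2 * (E 2 ^ (m + 1) * E 1) := by rw [pow_succ', mul_assoc]
    rw [h1, ih, geom_sum_succ' (x := ζ ^ r) (n := m + 1)]
    simp only [mul_add, mul_smul_comm]
    rw [show E 2 * (E 1 * E 2 ^ (m + 1)) = (E 2 * E 1) * E 2 ^ (m + 1) from (mul_assoc _ _ _).symm,
      rel21,
      show E 2 * (E 0 * E 2 ^ m) = (E 2 * E 0) * E 2 ^ m from (mul_assoc _ _ _).symm, rel20]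
    simp only [add_mul, smul_mul_assoc, mul_assoc, one_mul, mul_smul_comm, smul_smul, smul_add]
    simp only [pow_succ', mul_assoc]
    match_scalars <;> ring

/-- An element commuting with the three generators is central. -/
theorem Jackson.mem_center (z : Jackson k ζ r x)
    (h : ∀ i, z * E i = E i * z) : z ∈ Subalgebra.center k (Jackson k ζ r x) := by
  rw [Subalgebra.mem_center_iff]
  intro b
  obtain ⟨f, rfl⟩ := RingQuot.mkAlgHom_surjective k (JacksonRel k ζ r x) b
  induction f with
  | grade0 c =>
    rw [AlgHom.commutes]
    exact Algebra.commutes c z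
  | grade1 i => exact (h i).symm
  | mul a b ha hb => rw [map_mul, mul_assoc, hb, ← mul_assoc, ha, mul_assoc]
  | add a b ha hb => rw [map_add, add_mul, mul_add, ha, hb]

/-- A commutative ring structure on a subalgebra contained in the centre. -/
@[reducible]
noncomputable def Jackson.commRingOfLeCenter {A : Type*} [Ring A] [Algebra k A]
    (S : Subalgebra k A) (hS : S ≤ Subalgebra.center k A) : CommRing S :=
  { (inferInstance : Ring S) with
    mul_comm := fun a b => Subtype.ext <| by
      have := Subalgebra.mem_center_iff.mp (hS b.2) (a : A)
      simpa using this }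

end JacksonAux
/-- Let `k` be a field, `n ≥ 2`, `ζ ∈ k` a primitive `n`-th root
of unity, `r` an integer such that `ζ^r` is again a primitive `n`-th root of unity,
`x ∈ k`, and `l` the least positive integer with `n ∣ l·r`.  Then (i) `𝒥_x(r)` is
finitely generated as a module over its commutative subalgebra generated by
`e₀^l, e₁^l, e₂^l`, and (ii) consequently the centre `Z(𝒥_x(r))` is finitely
generated as a module over that same subalgebra (so the inclusion
`k[e₀^l, e₁^l, e₂^l] ⊆ Z(𝒥_x(r))` is a finite ring extension). -/
theorem jackson_finite_over_adjoin (k : Type*) [Field k]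
    (n : ℕ) (hn : 2 ≤ n) (ζ : k) (hζ : IsPrimitiveRoot ζ n)
    (r : ℤ) (hr : IsPrimitiveRoot (ζ ^ r) n) (x : k)
    (l : ℕ) (hl : 0 < l) (hdvd : (n : ℤ) ∣ (l : ℤ) * r)
    (hleast : ∀ m : ℕ, 0 < m → (n : ℤ) ∣ (m : ℤ) * r → l ≤ m) :
    Module.Finite
      (Algebra.adjoin k
        {JacksonGen k ζ r x 0 ^ l, JacksonGen k ζ r x 1 ^ l, JacksonGen k ζ r x 2 ^ l})
      (Jackson k ζ r x) ∧
    ∃ s : Finset (Jackson k ζ r x),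
      (s : Set (Jackson k ζ r x)) ⊆ (Subalgebra.center k (Jackson k ζ r x) : Set (Jackson k ζ r x)) ∧
      ∀ z ∈ Subalgebra.center k (Jackson k ζ r x),
        z ∈ Submodule.span
          (Algebra.adjoin k
            {JacksonGen k ζ r x 0 ^ l, JacksonGen k ζ r x 1 ^ l, JacksonGen k ζ r x 2 ^ l})
          (s : Set (Jackson k ζ r x)) := by
  classical
  -- `l = n`
  have hndvdl : n ∣ l := by
    have h1 : (ζ ^ r) ^ l = 1 := by
      rw [← zpow_natCast, ← zpow_mul]
      exact (hζ.zpow_eq_one_iff_dvd _).mpr (by rw [mul_comm]; exact_mod_cast hdvd)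
    exact (hr.pow_eq_one_iff_dvd l).mp h1
  have hln : l = n :=
    le_antisymm (hleast n (by omega) ⟨r, by push_cast; ring⟩) (Nat.le_of_dvd hl hndvdl)
  have hql : (ζ ^ r) ^ l = 1 := by rw [hln]; exact hr.pow_eq_one
  have hsum : ∑ i ∈ Finset.range l, (ζ ^ r) ^ i = 0 := by
    rw [hln]; exact hr.geom_sum_eq_zero (by omega)
  obtain ⟨m, hm⟩ : ∃ m, l = m + 1 := ⟨l - 1, by omega⟩
  have hql' : (ζ ^ r) ^ (m + 1) = 1 := by rw [← hm]; exact hql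
  have hsum' : ∑ i ∈ Finset.range (m + 1), (ζ ^ r) ^ i = 0 := by rw [← hm]; exact hsum
  have h2l : (ζ ^ r) ^ (2 * (m + 1)) = 1 := by rw [two_mul, pow_add, hql', one_mul]
  -- the three `l`-th powers are central
  have hc0 : JacksonGen k ζ r x 0 ^ l ∈ Subalgebra.center k (Jackson k ζ r x) := by
    refine Jackson.mem_center _ fun i => ?_
    fin_cases i
    · exact ((Commute.refl (JacksonGen k ζ r x 0)).pow_left l).eq
    · show JacksonGen k ζ r x 0 ^ l * JacksonGen k ζ r x 1
        = JacksonGen k ζ r x 1 * JacksonGen k ζ r x 0 ^ l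
      rw [Jackson.e0_pow_mul_e1, hql, one_smul]
    · show JacksonGen k ζ r x 0 ^ l * JacksonGen k ζ r x 2
        = JacksonGen k ζ r x 2 * JacksonGen k ζ r x 0 ^ l
      rw [Jackson.e2_mul_e0_pow, hql, one_smul]
  have hc1 : JacksonGen k ζ r x 1 ^ l ∈ Subalgebra.center k (Jackson k ζ r x) := by
    refine Jackson.mem_center _ fun i => ?_
    fin_cases i
    · show JacksonGen k ζ r x 1 ^ l * JacksonGen k ζ r x 0
        = JacksonGen k ζ r x 0 * JacksonGen k ζ r x 1 ^ l
      rw [Jackson.e0_mul_e1_pow, hql, one_smul]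
    · exact ((Commute.refl (JacksonGen k ζ r x 1)).pow_left l).eq
    · show JacksonGen k ζ r x 1 ^ l * JacksonGen k ζ r x 2
        = JacksonGen k ζ r x 2 * JacksonGen k ζ r x 1 ^ l
      rw [hm, Jackson.e2_mul_e1_pow m, h2l, hsum', one_smul]
      simp
  have hc2 : JacksonGen k ζ r x 2 ^ l ∈ Subalgebra.center k (Jackson k ζ r x) := by
    refine Jackson.mem_center _ fun i => ?_
    fin_cases i
    · show JacksonGen k ζ r x 2 ^ l * JacksonGen k ζ r x 0
        = JacksonGen k ζ r x 0 * JacksonGen k ζ r x 2 ^ l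
      rw [Jackson.e2_pow_mul_e0, hql, one_smul]
    · show JacksonGen k ζ r x 2 ^ l * JacksonGen k ζ r x 1
        = JacksonGen k ζ r x 1 * JacksonGen k ζ r x 2 ^ l
      rw [hm, Jackson.e2_pow_mul_e1 m, h2l, hsum', one_smul]
      simp
    · exact ((Commute.refl (JacksonGen k ζ r x 2)).pow_left l).eq
  set A := Algebra.adjoin k
    {JacksonGen k ζ r x 0 ^ l, JacksonGen k ζ r x 1 ^ l, JacksonGen k ζ r x 2 ^ l} with hA
  have hAc : A ≤ Subalgebra.center k (Jackson k ζ r x) := by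
    refine Algebra.adjoin_le ?_
    intro y hy
    simp only [Set.mem_insert_iff, Set.mem_singleton_iff] at hy
    rcases hy with rfl | rfl | rfl
    · exact hc0
    · exact hc1
    · exact hc2
  have hcen : ∀ u : Jackson k ζ r x, u ∈ Subalgebra.center k (Jackson k ζ r x) →
      ∀ y z : Jackson k ζ r x, y * (u * z) = u * (y * z) := by
    intro u hu y z
    rw [← mul_assoc, Subalgebra.mem_center_iff.mp hu y, mul_assoc]
  -- the spanning monomials
  set S : Finset (Jackson k ζ r x) := (Finset.univ : Finset (Fin l × Fin l × Fin l)).image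
    (fun p => JacksonGen k ζ r x 1 ^ (p.1 : ℕ) *
      (JacksonGen k ζ r x 0 ^ (p.2.1 : ℕ) * JacksonGen k ζ r x 2 ^ (p.2.2 : ℕ))) with hS
  set M : Submodule A (Jackson k ζ r x) := Submodule.span A (S : Set (Jackson k ζ r x)) with hM
  have hmulA : ∀ u : Jackson k ζ r x, u ∈ A → ∀ w : Jackson k ζ r x, w ∈ M → u * w ∈ M := by
    intro u hu w hw
    exact M.smul_mem (⟨u, hu⟩ : A) hw
  have hksm : ∀ (c : k) (w : Jackson k ζ r x), w ∈ M → c • w ∈ M := by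
    intro c w hw
    exact M.smul_of_tower_mem c hw
  have hA0 : JacksonGen k ζ r x 0 ^ l ∈ A := Algebra.subset_adjoin (by simp)
  have hA1 : JacksonGen k ζ r x 1 ^ l ∈ A := Algebra.subset_adjoin (by simp)
  have hA2 : JacksonGen k ζ r x 2 ^ l ∈ A := Algebra.subset_adjoin (by simp)
  have mono_mem : ∀ a b c : ℕ, JacksonGen k ζ r x 1 ^ a *
      (JacksonGen k ζ r x 0 ^ b * JacksonGen k ζ r x 2 ^ c) ∈ M := by
    intro a b c
    have hdecomp : ∀ (y : Jackson k ζ r x) (t : ℕ), y ^ t = (y ^ l) ^ (t / l) * y ^ (t % l) := by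
      intro y t
      rw [← pow_mul, ← pow_add, Nat.div_add_mod]
    have shuffle : ∀ p1 p0 p2 y1 y0 y2 : Jackson k ζ r x,
        p0 ∈ Subalgebra.center k (Jackson k ζ r x) →
        p2 ∈ Subalgebra.center k (Jackson k ζ r x) →
        (p1 * y1) * ((p0 * y0) * (p2 * y2)) = p1 * (p0 * (p2 * (y1 * (y0 * y2)))) := by
      intro p1 p0 p2 y1 y0 y2 h0 h2
      rw [mul_assoc p0 y0, mul_assoc p1 y1, hcen p0 h0, hcen p2 h2 y0, hcen p2 h2 y1]
    rw [hdecomp (JacksonGen k ζ r x 1) a, hdecomp (JacksonGen k ζ r x 0) b,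
      hdecomp (JacksonGen k ζ r x 2) c,
      shuffle _ _ _ _ _ _ (Subalgebra.pow_mem _ hc0 _) (Subalgebra.pow_mem _ hc2 _)]
    refine hmulA _ (Subalgebra.pow_mem _ hA1 _) _ ?_
    refine hmulA _ (Subalgebra.pow_mem _ hA0 _) _ ?_
    refine hmulA _ (Subalgebra.pow_mem _ hA2 _) _ ?_
    refine Submodule.subset_span ?_
    refine Finset.mem_coe.mpr (Finset.mem_image.mpr
      ⟨(⟨a % l, Nat.mod_lt _ hl⟩, ⟨b % l, Nat.mod_lt _ hl⟩, ⟨c % l, Nat.mod_lt _ hl⟩),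
        Finset.mem_univ _, rfl⟩)
  have hEX : ∀ b c : ℕ, JacksonGen k ζ r x 2 *
      (JacksonGen k ζ r x 0 ^ b * JacksonGen k ζ r x 2 ^ c)
      = (ζ ^ r) ^ b • (JacksonGen k ζ r x 0 ^ b * JacksonGen k ζ r x 2 ^ (c + 1)) := by
    intro b c
    rw [← mul_assoc, Jackson.e2_mul_e0_pow, smul_mul_assoc, mul_assoc, ← pow_succ']
  have hE0X : ∀ b c : ℕ, JacksonGen k ζ r x 0 *
      (JacksonGen k ζ r x 0 ^ b * JacksonGen k ζ r x 2 ^ c)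
      = JacksonGen k ζ r x 0 ^ (b + 1) * JacksonGen k ζ r x 2 ^ c := by
    intro b c
    rw [pow_succ', mul_assoc]
  have hgen : ∀ (i : Fin 3) (w : Jackson k ζ r x), w ∈ M → JacksonGen k ζ r x i * w ∈ M := by
    intro i w hw
    induction hw using Submodule.span_induction with
    | mem y hy =>
      obtain ⟨p, -, rfl⟩ := Finset.mem_image.mp (Finset.mem_coe.mp hy)
      obtain ⟨⟨a, -⟩, ⟨b, -⟩, ⟨c, -⟩⟩ := p
      simp only
      fin_cases i
      · -- e₀
        show JacksonGen k ζ r x 0 * (JacksonGen k ζ r x 1 ^ a *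
          (JacksonGen k ζ r x 0 ^ b * JacksonGen k ζ r x 2 ^ c)) ∈ M
        rw [← mul_assoc, Jackson.e0_mul_e1_pow, smul_mul_assoc, mul_assoc, hE0X]
        exact hksm _ _ (mono_mem a (b + 1) c)
      · -- e₁
        show JacksonGen k ζ r x 1 * (JacksonGen k ζ r x 1 ^ a *
          (JacksonGen k ζ r x 0 ^ b * JacksonGen k ζ r x 2 ^ c)) ∈ M
        rw [← mul_assoc, ← pow_succ']
        exact mono_mem (a + 1) b c
      · -- e₂
        show JacksonGen k ζ r x 2 * (JacksonGen k ζ r x 1 ^ a *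
          (JacksonGen k ζ r x 0 ^ b * JacksonGen k ζ r x 2 ^ c)) ∈ M
        cases a with
        | zero =>
          simp only [pow_zero, one_mul]
          rw [hEX]
          refine hksm _ _ ?_
          simpa using mono_mem 0 b (c + 1)
        | succ a' =>
          rw [← mul_assoc, Jackson.e2_mul_e1_pow a', add_mul, add_mul,
            smul_mul_assoc, smul_mul_assoc, smul_mul_assoc, mul_assoc, mul_assoc, hEX,
            mul_smul_comm, smul_smul, mul_assoc (JacksonGen k ζ r x 1 ^ a') (JacksonGen k ζ r x 0),
            hE0X]
          refine M.add_mem (M.add_mem ?_ ?_) ?_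
          · exact hksm _ _ (mono_mem (a' + 1) b (c + 1))
          · exact hksm _ _ (mono_mem a' (b + 1) c)
          · exact hksm _ _ (mono_mem a' b c)
    | zero =>
      rw [mul_zero]; exact M.zero_mem
    | add u v hu hv ihu ihv =>
      rw [mul_add]; exact M.add_mem ihu ihv
    | smul t u hu ihu =>
      have ht : (t : Jackson k ζ r x) ∈ Subalgebra.center k (Jackson k ζ r x) := hAc t.2
      have h1 : JacksonGen k ζ r x i * (t • u) = t • (JacksonGen k ζ r x i * u) := by
        show JacksonGen k ζ r x i * ((t : Jackson k ζ r x) * u)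
          = (t : Jackson k ζ r x) * (JacksonGen k ζ r x i * u)
        exact hcen _ ht _ _
      rw [h1]
      exact M.smul_mem t ihu
  have hT : ∀ y : Jackson k ζ r x, ∀ w : Jackson k ζ r x, w ∈ M → y * w ∈ M := by
    intro y
    obtain ⟨f, rfl⟩ := RingQuot.mkAlgHom_surjective k (JacksonRel k ζ r x) y
    induction f with
    | grade0 c =>
      intro w hw
      rw [AlgHom.commutes, ← Algebra.smul_def]
      exact hksm c w hw
    | grade1 i =>
      intro w hw
      exact hgen i w hw
    | mul a b ha hb =>
      intro w hw
      rw [map_mul, mul_assoc]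
      exact ha _ (hb _ hw)
    | add a b ha hb =>
      intro w hw
      rw [map_add, add_mul]
      exact M.add_mem (ha _ hw) (hb _ hw)
  have hone : (1 : Jackson k ζ r x) ∈ M := by simpa using mono_mem 0 0 0
  have htop : ∀ y : Jackson k ζ r x, y ∈ M := fun y => by simpa using hT y 1 hone
  have hfin : Module.Finite A (Jackson k ζ r x) :=
    ⟨⟨S, eq_top_iff.mpr fun y _ => htop y⟩⟩
  refine ⟨hfin, ?_⟩
  -- part (ii)
  letI : CommRing A := Jackson.commRingOfLeCenter A hAc
  let g : Fin 3 → A :=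
    ![⟨JacksonGen k ζ r x 0 ^ l, hA0⟩, ⟨JacksonGen k ζ r x 1 ^ l, hA1⟩,
      ⟨JacksonGen k ζ r x 2 ^ l, hA2⟩]
  have hsurj : Function.Surjective (MvPolynomial.aeval (R := k) g) := by
    rintro ⟨a, ha⟩
    rw [hA] at ha
    have : ∃ p : MvPolynomial (Fin 3) k,
        ((MvPolynomial.aeval (R := k) g p : A) : Jackson k ζ r x) = a := by
      induction ha using Algebra.adjoin_induction with
      | mem y hy =>
        simp only [Set.mem_insert_iff, Set.mem_singleton_iff] at hy
        rcases hy with rfl | rfl | rfl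
        · exact ⟨MvPolynomial.X 0, by simp [g]⟩
        · exact ⟨MvPolynomial.X 1, by simp [g]⟩
        · exact ⟨MvPolynomial.X 2, by simp [g]⟩
      | algebraMap c =>
        exact ⟨MvPolynomial.C c, by simp⟩
      | add u v hu hv ihu ihv =>
        obtain ⟨p, hp⟩ := ihu hu
        obtain ⟨q', hq'⟩ := ihv hv
        exact ⟨p + q', by rw [map_add]; push_cast; rw [hp, hq']⟩
      | mul u v hu hv ihu ihv =>
        obtain ⟨p, hp⟩ := ihu hu
        obtain ⟨q', hq'⟩ := ihv hv
        exact ⟨p * q', by rw [map_mul]; push_cast; rw [hp, hq']⟩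
    obtain ⟨p, hp⟩ := this
    exact ⟨p, Subtype.ext hp⟩
  haveI : IsNoetherianRing A :=
    isNoetherianRing_of_surjective (MvPolynomial (Fin 3) k) A
      (MvPolynomial.aeval (R := k) g).toRingHom hsurj
  haveI : Module.Finite A (Jackson k ζ r x) := hfin
  haveI : IsNoetherian A (Jackson k ζ r x) := inferInstance
  let C : Submodule A (Jackson k ζ r x) :=
    { carrier := Subalgebra.center k (Jackson k ζ r x)
      add_mem' := fun h1 h2 => add_mem h1 h2
      zero_mem' := zero_mem _
      smul_mem' := fun t z hz => by
        show (t : Jackson k ζ r x) * z ∈ Subalgebra.center k (Jackson k ζ r x)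
        exact mul_mem (hAc t.2) hz }
  obtain ⟨s, hs⟩ := IsNoetherian.noetherian C
  refine ⟨s, ?_, ?_⟩
  · intro y hy
    have hyC : y ∈ C := hs ▸ Submodule.subset_span hy
    exact hyC
  · intro z hz
    have hzC : z ∈ C := hz
    have : z ∈ Submodule.span A (s : Set (Jackson k ζ r x)) := by
      rw [hs]; exact hzC
    exact this
end

section
/- Let k be a field containing a primitive m-th root of unity ζ (m ≥ 2), and let a, b ∈ k with a ≠ 0 and b ≠ 0. Then the quotient of the quantum plane k⟨X, Y⟩/(XY − ζYX) by the additional relations X^m = a and Y^m = b, i.e. the k-algebra Q := k⟨X, Y⟩/(XY − ζYX, X^m − a, Y^m − b), is a central simple k-algebra of k-dimension m²; in particular it defines a class in the Brauer group Br(k). -/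
/-- The defining relations of the cyclic algebra `Q`: generators `X, Y` and relations
`XY = ζYX`, `X^m = a`, `Y^m = b`. -/
inductive CyclicRel (k : Type*) [Field k] (m : ℕ) (ζ a b : k) :
    FreeAlgebra k (Fin 2) → FreeAlgebra k (Fin 2) → Prop
  | comm : CyclicRel k m ζ a b (FreeAlgebra.ι k 0 * FreeAlgebra.ι k 1)
      (ζ • (FreeAlgebra.ι k 1 * FreeAlgebra.ι k 0))
  | xPow : CyclicRel k m ζ a b (FreeAlgebra.ι k 0 ^ m) (algebraMap k (FreeAlgebra k (Fin 2)) a)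
  | yPow : CyclicRel k m ζ a b (FreeAlgebra.ι k 1 ^ m) (algebraMap k (FreeAlgebra k (Fin 2)) b)

/-- The algebra `Q = k⟨X, Y⟩/(XY − ζYX, X^m − a, Y^m − b)`. -/
abbrev CyclicAlg (k : Type*) [Field k] (m : ℕ) (ζ a b : k) :=
  RingQuot (CyclicRel k m ζ a b)

set_option linter.unusedSectionVars false
set_option linter.dupNamespace false
set_option maxHeartbeats 1000000

namespace CyclicAux

variable {k : Type*} [Field k] {m : ℕ} [NeZero m]

abbrev V (k : Type*) [Field k] (m : ℕ) : Type _ := (ZMod m × ZMod m) → k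

variable (k m) in
def Xop (ζ a : k) : Module.End k (V k m) where
  toFun f := fun p => (if p.1 = 0 then a else 1) * ζ ^ p.2.val * f (p.1 - 1, p.2)
  map_add' f g := by funext p; simp [mul_add]
  map_smul' c f := by funext p; simp only [Pi.smul_apply, smul_eq_mul, RingHom.id_apply]; ring

variable (k m) in
def Yop (b : k) : Module.End k (V k m) where
  toFun f := fun p => (if p.2 = 0 then b else 1) * f (p.1, p.2 - 1)
  map_add' f g := by funext p; simp [mul_add]
  map_smul' c f := by funext p; simp only [Pi.smul_apply, smul_eq_mul, RingHom.id_apply]; ring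

lemma pow_mod {ζ : k} (hζ1 : ζ ^ m = 1) (n : ℕ) : ζ ^ n = ζ ^ (n % m) := by
  conv_lhs => rw [← Nat.div_add_mod n m]
  rw [pow_add, pow_mul, hζ1, one_pow, one_mul]

lemma pow_val_sub_one {ζ : k} (hζ1 : ζ ^ m = 1) (j : ZMod m) :
    ζ * ζ ^ (j - 1).val = ζ ^ j.val := by
  have h2 : (((j - 1).val + 1 : ℕ) : ZMod m) = ((j.val : ℕ) : ZMod m) := by
    push_cast
    simp only [ZMod.natCast_val, ZMod.cast_id]
    ring
  have h := (ZMod.natCast_eq_natCast_iff' _ _ _).1 h2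
  calc ζ * ζ ^ (j - 1).val = ζ ^ ((j - 1).val + 1) := by rw [pow_succ]; ring
    _ = ζ ^ (((j - 1).val + 1) % m) := pow_mod hζ1 _
    _ = ζ ^ (j.val % m) := by rw [h]
    _ = ζ ^ j.val := (pow_mod hζ1 _).symm

lemma XY_comm {ζ a b : k} (hζ1 : ζ ^ m = 1) :
    Xop k m ζ a * Yop k m b = ζ • (Yop k m b * Xop k m ζ a) := by
  apply LinearMap.ext; intro f; funext p
  simp only [Xop, Yop, Module.End.mul_apply, LinearMap.coe_mk, AddHom.coe_mk,
    LinearMap.smul_apply, Pi.smul_apply, smul_eq_mul]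
  rw [← pow_val_sub_one hζ1 p.2]
  ring


lemma Xop_pow_apply (ζ a : k) (t : ℕ) (f : V k m) (p : ZMod m × ZMod m) :
    ((Xop k m ζ a ^ t) f) p =
      ζ ^ (t * p.2.val) * (∏ r ∈ Finset.range t, if p.1 - (r : ZMod m) = 0 then a else 1)
        * f (p.1 - (t : ZMod m), p.2) := by
  induction t generalizing p with
  | zero => simp
  | succ t ih =>
    rw [pow_succ', Module.End.mul_apply]
    show (if p.1 = 0 then a else 1) * ζ ^ p.2.val * ((Xop k m ζ a ^ t) f (p.1 - 1, p.2)) = _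
    rw [ih]
    have h3 : ∀ r : ℕ, (p.1 - 1) - (r : ZMod m) = p.1 - ((r : ℕ) + 1 : ZMod m) := by
      intro r; ring
    simp only [h3]
    rw [Finset.prod_range_succ']
    have h4 : ∀ r : ℕ, p.1 - (((r + 1 : ℕ) : ZMod m)) = p.1 - ((r : ℕ) + 1 : ZMod m) := by
      intro r; push_cast; ring
    simp only [h4, Nat.cast_zero, sub_zero]
    have h6 : ζ ^ ((t + 1) * p.2.val) = ζ ^ p.2.val * ζ ^ (t * p.2.val) := by
      rw [Nat.succ_mul, pow_add]; ring
    rw [h6]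
    ring

lemma Yop_pow_apply (b : k) (t : ℕ) (f : V k m) (p : ZMod m × ZMod m) :
    ((Yop k m b ^ t) f) p =
      (∏ r ∈ Finset.range t, if p.2 - (r : ZMod m) = 0 then b else 1)
        * f (p.1, p.2 - (t : ZMod m)) := by
  induction t generalizing p with
  | zero => simp
  | succ t ih =>
    rw [pow_succ', Module.End.mul_apply]
    show (if p.2 = 0 then b else 1) * ((Yop k m b ^ t) f (p.1, p.2 - 1)) = _
    rw [ih]
    have h3 : ∀ r : ℕ, (p.2 - 1) - (r : ZMod m) = p.2 - ((r : ℕ) + 1 : ZMod m) := by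
      intro r; ring
    simp only [h3]
    rw [Finset.prod_range_succ']
    have h4 : ∀ r : ℕ, p.2 - (((r + 1 : ℕ) : ZMod m)) = p.2 - ((r : ℕ) + 1 : ZMod m) := by
      intro r; push_cast; ring
    simp only [h4, Nat.cast_zero, sub_zero]
    ring

lemma prod_univ_ite (a : k) (z0 : ZMod m) :
    (∏ r ∈ Finset.range m, if z0 - (r : ZMod m) = 0 then a else 1) = a := by
  have hinj : Function.Injective (fun i : Fin m => z0 - ((i : ℕ) : ZMod m)) := by
    intro i j hij
    simp only [sub_right_injective.eq_iff] at hij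
    have : ((i : ℕ) : ZMod m).val = ((j : ℕ) : ZMod m).val := by rw [hij]
    rwa [ZMod.val_cast_of_lt i.isLt, ZMod.val_cast_of_lt j.isLt, ← Fin.ext_iff] at this
  have hbij : Function.Bijective (fun i : Fin m => z0 - ((i : ℕ) : ZMod m)) := by
    rw [Fintype.bijective_iff_injective_and_card]
    exact ⟨hinj, by simp [ZMod.card]⟩
  calc (∏ r ∈ Finset.range m, if z0 - (r : ZMod m) = 0 then a else 1)
      = ∏ i : Fin m, (if z0 - ((i : ℕ) : ZMod m) = 0 then a else 1) :=
        (Fin.prod_univ_eq_prod_range _ m).symm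
    _ = ∏ z : ZMod m, (if z = 0 then a else 1) :=
        Fintype.prod_bijective _ hbij _ _ (fun i => rfl)
    _ = a := by rw [Finset.prod_ite_eq' Finset.univ (0 : ZMod m) (fun _ => a)]; simp

lemma Xop_pow_m {ζ : k} (a : k) (hζ1 : ζ ^ m = 1) :
    Xop k m ζ a ^ m = algebraMap k (Module.End k (V k m)) a := by
  apply LinearMap.ext; intro f; funext p
  rw [Xop_pow_apply, prod_univ_ite, pow_mul, hζ1, one_pow, one_mul]
  rw [Module.algebraMap_end_apply, Pi.smul_apply, smul_eq_mul]
  simp [ZMod.natCast_self]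

lemma Yop_pow_m (b : k) :
    Yop k m b ^ m = algebraMap k (Module.End k (V k m)) b := by
  apply LinearMap.ext; intro f; funext p
  rw [Yop_pow_apply, prod_univ_ite]
  rw [Module.algebraMap_end_apply, Pi.smul_apply, smul_eq_mul]
  simp [ZMod.natCast_self]


variable (k m) in
def freeMap (ζ a b : k) : FreeAlgebra k (Fin 2) →ₐ[k] Module.End k (V k m) :=
  FreeAlgebra.lift k ![Xop k m ζ a, Yop k m b]

lemma freeMap_rel {ζ a b : k} (hζ1 : ζ ^ m = 1) :
    ∀ ⦃x y⦄, CyclicRel k m ζ a b x y → freeMap k m ζ a b x = freeMap k m ζ a b y := by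
  intro x y h
  cases h with
  | comm =>
    simp only [freeMap, map_mul, map_smul, FreeAlgebra.lift_ι_apply,
      Matrix.cons_val_zero, Matrix.cons_val_one, Matrix.head_cons]
    exact XY_comm hζ1
  | xPow =>
    simp only [freeMap, map_pow, FreeAlgebra.lift_ι_apply, Matrix.cons_val_zero,
      AlgHom.commutes]
    exact Xop_pow_m _ hζ1
  | yPow =>
    simp only [freeMap, map_pow, FreeAlgebra.lift_ι_apply, Matrix.cons_val_one,
      Matrix.head_cons, AlgHom.commutes]
    exact Yop_pow_m _

variable (k m) in
def rho (ζ a b : k) (hζ1 : ζ ^ m = 1) : CyclicAlg k m ζ a b →ₐ[k] Module.End k (V k m) :=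
  RingQuot.liftAlgHom k ⟨freeMap k m ζ a b, freeMap_rel hζ1⟩

variable (k m) in
def Xq (ζ a b : k) : CyclicAlg k m ζ a b :=
  RingQuot.mkAlgHom k (CyclicRel k m ζ a b) (FreeAlgebra.ι k 0)

variable (k m) in
def Yq (ζ a b : k) : CyclicAlg k m ζ a b :=
  RingQuot.mkAlgHom k (CyclicRel k m ζ a b) (FreeAlgebra.ι k 1)

lemma rho_Xq {ζ a b : k} (hζ1 : ζ ^ m = 1) :
    rho k m ζ a b hζ1 (Xq k m ζ a b) = Xop k m ζ a := by
  simp [rho, Xq, freeMap]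

lemma rho_Yq {ζ a b : k} (hζ1 : ζ ^ m = 1) :
    rho k m ζ a b hζ1 (Yq k m ζ a b) = Yop k m b := by
  simp [rho, Yq, freeMap]

variable (k m) in
def vv (ζ a b : k) (p : ZMod m × ZMod m) : CyclicAlg k m ζ a b :=
  Xq k m ζ a b ^ p.1.val * Yq k m ζ a b ^ p.2.val

lemma T_single {ζ a b : k} (ha : a ≠ 0) (hb : b ≠ 0) (hz : ζ ≠ 0) (p : ZMod m × ZMod m) :
    ∃ c : k, c ≠ 0 ∧
      (Xop k m ζ a ^ p.1.val * Yop k m b ^ p.2.val) (Pi.single ((0 : ZMod m), (0 : ZMod m)) 1)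
        = Pi.single p c := by
  have hcast1 : ((p.1.val : ℕ) : ZMod m) = p.1 := by
    simp [ZMod.natCast_val, ZMod.cast_id]
  have hcast2 : ((p.2.val : ℕ) : ZMod m) = p.2 := by
    simp [ZMod.natCast_val, ZMod.cast_id]
  refine ⟨ζ ^ (p.1.val * p.2.val)
      * (∏ r ∈ Finset.range p.1.val, if p.1 - (r : ZMod m) = 0 then a else 1)
      * (∏ r ∈ Finset.range p.2.val, if p.2 - (r : ZMod m) = 0 then b else 1), ?_, ?_⟩
  · refine mul_ne_zero (mul_ne_zero (pow_ne_zero _ hz) ?_) ?_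
    · rw [Finset.prod_ne_zero_iff]; intro r _; split <;> simp [ha]
    · rw [Finset.prod_ne_zero_iff]; intro r _; split <;> simp [hb]
  · funext q
    rw [Module.End.mul_apply, Xop_pow_apply, Yop_pow_apply]
    by_cases hq : q = p
    · subst hq
      rw [hcast1, hcast2, sub_self, sub_self]
      rw [Pi.single_eq_same, Pi.single_eq_same]
      ring
    · rw [Pi.single_eq_of_ne hq]
      have hne : ((q.1 - ((p.1.val : ℕ) : ZMod m), q.2 - ((p.2.val : ℕ) : ZMod m)) :
          ZMod m × ZMod m) ≠ ((0 : ZMod m), (0 : ZMod m)) := by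
        rw [hcast1, hcast2]
        intro hcontr
        apply hq
        have h1 := congrArg Prod.fst hcontr
        have h2 := congrArg Prod.snd hcontr
        simp only at h1 h2
        exact Prod.ext (sub_eq_zero.1 h1) (sub_eq_zero.1 h2)
      rw [Pi.single_eq_of_ne hne]
      ring

lemma vv_linearIndependent {ζ a b : k} (ha : a ≠ 0) (hb : b ≠ 0) (hz : ζ ≠ 0)
    (hζ1 : ζ ^ m = 1) : LinearIndependent k (vv k m ζ a b) := by
  choose c hc hsingle using fun p => T_single (m := m) ha hb hz p
  let L : CyclicAlg k m ζ a b →ₗ[k] V k m :=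
    { toFun := fun z => rho k m ζ a b hζ1 z (Pi.single ((0 : ZMod m), (0 : ZMod m)) 1)
      map_add' := by intros; simp
      map_smul' := by intros; simp }
  apply LinearIndependent.of_comp L
  have hLvv : (L ∘ vv k m ζ a b) = fun p => Pi.single p (c p) := by
    funext p
    show rho k m ζ a b hζ1 (vv k m ζ a b p) _ = _
    rw [vv, map_mul, map_pow, map_pow, rho_Xq hζ1, rho_Yq hζ1, hsingle p]
  rw [hLvv]
  have hli := (Pi.basisFun k (ZMod m × ZMod m)).linearIndependent
  have h2 := hli.units_smul (fun p => Units.mk0 (c p) (hc p))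
  convert h2 using 1
  funext p
  simp only [Pi.smul_apply', Pi.basisFun_apply]
  rw [← Pi.single_smul]
  simp [Units.smul_def]

variable {k : Type*} [Field k] {m : ℕ} [NeZero m] {ζ a b : k}

local notation "Q" => CyclicAlg k m ζ a b

lemma Xq_mul_Yq : Xq k m ζ a b * Yq k m ζ a b = ζ • (Yq k m ζ a b * Xq k m ζ a b) := by
  have h := RingQuot.mkAlgHom_rel k (CyclicRel.comm (k := k) (m := m) (ζ := ζ) (a := a) (b := b))
  unfold Xq Yq
  simpa only [map_mul, map_smul] using h

lemma Xq_pow_m : Xq k m ζ a b ^ m = algebraMap k Q a := by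
  have h := RingQuot.mkAlgHom_rel k (CyclicRel.xPow (k := k) (m := m) (ζ := ζ) (a := a) (b := b))
  unfold Xq
  simpa only [map_pow, AlgHom.commutes] using h

lemma Yq_pow_m : Yq k m ζ a b ^ m = algebraMap k Q b := by
  have h := RingQuot.mkAlgHom_rel k (CyclicRel.yPow (k := k) (m := m) (ζ := ζ) (a := a) (b := b))
  unfold Yq
  simpa only [map_pow, AlgHom.commutes] using h

lemma Yq_Xq (hz : ζ ≠ 0) :
    Yq k m ζ a b * Xq k m ζ a b = ζ⁻¹ • (Xq k m ζ a b * Yq k m ζ a b) := by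
  rw [Xq_mul_Yq, smul_smul, inv_mul_cancel₀ hz, one_smul]

lemma Yq_Xq_pow (hz : ζ ≠ 0) (i : ℕ) :
    Yq k m ζ a b * Xq k m ζ a b ^ i = (ζ⁻¹) ^ i • (Xq k m ζ a b ^ i * Yq k m ζ a b) := by
  induction i with
  | zero => simp
  | succ i ih =>
    calc Yq k m ζ a b * Xq k m ζ a b ^ (i + 1)
        = (Yq k m ζ a b * Xq k m ζ a b ^ i) * Xq k m ζ a b := by rw [pow_succ, mul_assoc]
      _ = (ζ⁻¹) ^ i • (Xq k m ζ a b ^ i * (Yq k m ζ a b * Xq k m ζ a b)) := by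
          rw [ih, smul_mul_assoc, mul_assoc]
      _ = (ζ⁻¹) ^ i • (Xq k m ζ a b ^ i * (ζ⁻¹ • (Xq k m ζ a b * Yq k m ζ a b))) := by
          rw [Yq_Xq hz]
      _ = (ζ⁻¹) ^ (i + 1) • (Xq k m ζ a b ^ (i + 1) * Yq k m ζ a b) := by
          rw [mul_smul_comm, smul_smul, ← mul_assoc, ← pow_succ, ← pow_succ]

lemma Yq_pow_Xq_pow (hz : ζ ≠ 0) (j i : ℕ) :
    Yq k m ζ a b ^ j * Xq k m ζ a b ^ i
      = (ζ⁻¹) ^ (i * j) • (Xq k m ζ a b ^ i * Yq k m ζ a b ^ j) := by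
  induction j with
  | zero => simp
  | succ j ih =>
    calc Yq k m ζ a b ^ (j + 1) * Xq k m ζ a b ^ i
        = Yq k m ζ a b ^ j * (Yq k m ζ a b * Xq k m ζ a b ^ i) := by rw [pow_succ, mul_assoc]
      _ = Yq k m ζ a b ^ j * ((ζ⁻¹) ^ i • (Xq k m ζ a b ^ i * Yq k m ζ a b)) := by
          rw [Yq_Xq_pow hz]
      _ = (ζ⁻¹) ^ i • ((Yq k m ζ a b ^ j * Xq k m ζ a b ^ i) * Yq k m ζ a b) := by
          rw [mul_smul_comm, mul_assoc]
      _ = (ζ⁻¹) ^ i • (((ζ⁻¹) ^ (i * j) • (Xq k m ζ a b ^ i * Yq k m ζ a b ^ j))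
            * Yq k m ζ a b) := by rw [ih]
      _ = (ζ⁻¹) ^ (i * (j + 1)) • (Xq k m ζ a b ^ i * Yq k m ζ a b ^ (j + 1)) := by
          rw [smul_mul_assoc, smul_smul, ← pow_add, mul_assoc, ← pow_succ]
          ring_nf

lemma Xq_pow_reduce (n : ℕ) :
    Xq k m ζ a b ^ n = a ^ (n / m) • Xq k m ζ a b ^ (n % m) := by
  conv_lhs => rw [← Nat.div_add_mod n m]
  rw [pow_add, pow_mul, Xq_pow_m, ← map_pow, ← Algebra.smul_def]

lemma Yq_pow_reduce (n : ℕ) :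
    Yq k m ζ a b ^ n = b ^ (n / m) • Yq k m ζ a b ^ (n % m) := by
  conv_lhs => rw [← Nat.div_add_mod n m]
  rw [pow_add, pow_mul, Yq_pow_m, ← map_pow, ← Algebra.smul_def]

lemma vv_mul (hz : ζ ≠ 0) (p q : ZMod m × ZMod m) :
    vv k m ζ a b p * vv k m ζ a b q =
      ((ζ⁻¹) ^ (q.1.val * p.2.val) * a ^ ((p.1.val + q.1.val) / m)
        * b ^ ((p.2.val + q.2.val) / m)) • vv k m ζ a b (p + q) := by
  have hassoc : ∀ x y z w : Q, x * y * (z * w) = x * ((y * z) * w) := by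
    intros; noncomm_ring
  rw [vv, vv, hassoc, Yq_pow_Xq_pow hz, smul_mul_assoc, mul_smul_comm]
  have : Xq k m ζ a b ^ p.1.val * (Xq k m ζ a b ^ q.1.val * Yq k m ζ a b ^ p.2.val
      * Yq k m ζ a b ^ q.2.val)
      = Xq k m ζ a b ^ (p.1.val + q.1.val) * Yq k m ζ a b ^ (p.2.val + q.2.val) := by
    rw [pow_add, pow_add]; noncomm_ring
  rw [this, Xq_pow_reduce, Yq_pow_reduce, smul_mul_assoc, mul_smul_comm, smul_smul, smul_smul]
  have hv : vv k m ζ a b (p + q)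
      = Xq k m ζ a b ^ ((p.1.val + q.1.val) % m) * Yq k m ζ a b ^ ((p.2.val + q.2.val) % m) := by
    rw [vv]
    congr 2
    · exact ZMod.val_add p.1 q.1
    · exact ZMod.val_add p.2 q.2
  rw [hv]

end CyclicAux

namespace CyclicAux2
open CyclicAux

variable {k : Type*} [Field k] {m : ℕ} [NeZero m] {ζ a b : k}

local notation "Q" => CyclicAlg k m ζ a b

lemma vv_zero : vv k m ζ a b 0 = 1 := by
  simp [vv, ZMod.val_zero]

lemma vv_span (hm : 2 ≤ m) (hz : ζ ≠ 0) :
    Submodule.span k (Set.range (vv k m ζ a b)) = ⊤ := by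
  haveI : Fact (1 < m) := ⟨hm⟩
  set S := Submodule.span k (Set.range (vv k m ζ a b)) with hS
  have hone : (1 : Q) ∈ S := by
    rw [← vv_zero]
    exact Submodule.subset_span ⟨0, rfl⟩
  have hXq : Xq k m ζ a b ∈ S := by
    have : Xq k m ζ a b = vv k m ζ a b (1, 0) := by
      simp [vv, ZMod.val_one, ZMod.val_zero]
    rw [this]; exact Submodule.subset_span ⟨_, rfl⟩
  have hYq : Yq k m ζ a b ∈ S := by
    have : Yq k m ζ a b = vv k m ζ a b (0, 1) := by
      simp [vv, ZMod.val_one, ZMod.val_zero]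
    rw [this]; exact Submodule.subset_span ⟨_, rfl⟩
  have hmulSS : S * S ≤ S := by
    rw [hS, Submodule.span_mul_span]
    apply Submodule.span_le.2
    rintro x hx
    rw [Set.mem_mul] at hx
    obtain ⟨u, ⟨p, rfl⟩, w, ⟨q, rfl⟩, rfl⟩ := hx
    rw [vv_mul hz]
    exact Submodule.smul_mem _ _ (Submodule.subset_span ⟨p + q, rfl⟩)
  have hmul : ∀ x y : Q, x ∈ S → y ∈ S → x * y ∈ S := fun x y hx hy =>
    hmulSS (Submodule.mul_mem_mul hx hy)
  rw [eq_top_iff]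
  intro z _
  obtain ⟨x, rfl⟩ := RingQuot.mkAlgHom_surjective k (CyclicRel k m ζ a b) z
  induction x with
  | grade0 r =>
    rw [AlgHom.commutes]
    rw [Algebra.algebraMap_eq_smul_one]
    exact Submodule.smul_mem _ _ hone
  | grade1 i =>
    fin_cases i
    · exact hXq
    · exact hYq
  | mul x y hx hy => rw [map_mul]; exact hmul _ _ (hx trivial) (hy trivial)
  | add x y hx hy => rw [map_add]; exact Submodule.add_mem _ (hx trivial) (hy trivial)

lemma isUnit_Xq (ha : a ≠ 0) : IsUnit (Xq k m ζ a b) := by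
  have hm1 : m - 1 + 1 = m := Nat.succ_pred_eq_of_pos (NeZero.pos m)
  have h1 : Xq k m ζ a b * (a⁻¹ • Xq k m ζ a b ^ (m - 1)) = 1 := by
    rw [mul_smul_comm, ← pow_succ', hm1, Xq_pow_m, Algebra.algebraMap_eq_smul_one,
      smul_smul, inv_mul_cancel₀ ha, one_smul]
  have h2 : (a⁻¹ • Xq k m ζ a b ^ (m - 1)) * Xq k m ζ a b = 1 := by
    rw [smul_mul_assoc, ← pow_succ, hm1, Xq_pow_m, Algebra.algebraMap_eq_smul_one,
      smul_smul, inv_mul_cancel₀ ha, one_smul]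
  exact ⟨⟨Xq k m ζ a b, a⁻¹ • Xq k m ζ a b ^ (m - 1), h1, h2⟩, rfl⟩

lemma isUnit_Yq (hb : b ≠ 0) : IsUnit (Yq k m ζ a b) := by
  have hm1 : m - 1 + 1 = m := Nat.succ_pred_eq_of_pos (NeZero.pos m)
  have h1 : Yq k m ζ a b * (b⁻¹ • Yq k m ζ a b ^ (m - 1)) = 1 := by
    rw [mul_smul_comm, ← pow_succ', hm1, Yq_pow_m, Algebra.algebraMap_eq_smul_one,
      smul_smul, inv_mul_cancel₀ hb, one_smul]
  have h2 : (b⁻¹ • Yq k m ζ a b ^ (m - 1)) * Yq k m ζ a b = 1 := by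
    rw [smul_mul_assoc, ← pow_succ, hm1, Yq_pow_m, Algebra.algebraMap_eq_smul_one,
      smul_smul, inv_mul_cancel₀ hb, one_smul]
  exact ⟨⟨Yq k m ζ a b, b⁻¹ • Yq k m ζ a b ^ (m - 1), h1, h2⟩, rfl⟩

lemma isUnit_vv (ha : a ≠ 0) (hb : b ≠ 0) (p : ZMod m × ZMod m) :
    IsUnit (vv k m ζ a b p) :=
  ((isUnit_Xq ha).pow _).mul ((isUnit_Yq hb).pow _)

end CyclicAux2

namespace CyclicAux3
open CyclicAux CyclicAux2

variable {k : Type*} [Field k] {m : ℕ} [NeZero m] {ζ a b : k}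

local notation "Q" => CyclicAlg k m ζ a b

lemma vv_mul_Xq (hz : ζ ≠ 0) (p : ZMod m × ZMod m) :
    vv k m ζ a b p * Xq k m ζ a b
      = (ζ⁻¹) ^ p.2.val • (Xq k m ζ a b * vv k m ζ a b p) := by
  have h1 : Yq k m ζ a b ^ p.2.val * Xq k m ζ a b
      = (ζ⁻¹) ^ p.2.val • (Xq k m ζ a b * Yq k m ζ a b ^ p.2.val) := by
    simpa using Yq_pow_Xq_pow (a := a) (b := b) hz p.2.val 1
  rw [vv, mul_assoc, h1, mul_smul_comm, ← mul_assoc, pow_mul_comm', mul_assoc]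

lemma Xq_mul_vv (hz : ζ ≠ 0) (p : ZMod m × ZMod m) :
    Xq k m ζ a b * vv k m ζ a b p
      = ζ ^ p.2.val • (vv k m ζ a b p * Xq k m ζ a b) := by
  rw [vv_mul_Xq hz, smul_smul, ← mul_pow, mul_inv_cancel₀ hz, one_pow, one_smul]

lemma Yq_mul_vv (hz : ζ ≠ 0) (p : ZMod m × ZMod m) :
    Yq k m ζ a b * vv k m ζ a b p
      = (ζ⁻¹) ^ p.1.val • (vv k m ζ a b p * Yq k m ζ a b) := by
  rw [vv, ← mul_assoc, Yq_Xq_pow hz, smul_mul_assoc, mul_assoc, ← pow_mul_comm', ← mul_assoc]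

lemma coeff_eq (hli : LinearIndependent k (vv k m ζ a b)) {c d : ZMod m × ZMod m → k}
    (h : ∑ p, c p • vv k m ζ a b p = ∑ p, d p • vv k m ζ a b p) : ∀ p, c p = d p := by
  intro p
  have h0 : ∑ q, (c q - d q) • vv k m ζ a b q = 0 := by
    have hterm : ∀ q : ZMod m × ZMod m,
        (c q - d q) • vv k m ζ a b q = c q • vv k m ζ a b q - d q • vv k m ζ a b q :=
      fun q => sub_smul (c q) (d q) (vv k m ζ a b q)
    rw [Finset.sum_congr rfl fun q _ => hterm q, Finset.sum_sub_distrib, h, sub_self]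
  have := Fintype.linearIndependent_iff.1 hli (fun q => c q - d q) h0 p
  exact sub_eq_zero.1 this

lemma smul_mem_I (I : TwoSidedIdeal Q) (r : k) {u : Q} (hu : u ∈ I) : r • u ∈ I := by
  rw [Algebra.smul_def]
  exact I.mul_mem_left _ _ hu

open scoped Classical in
lemma extract (hm0 : (m : k) ≠ 0) (c : ZMod m × ZMod m → k) (I : TwoSidedIdeal Q)
    (hzI : (∑ p, c p • vv k m ζ a b p) ∈ I)
    (Φ : Q →ₗ[k] Q) (hΦI : ∀ u ∈ I, Φ u ∈ I) (μ : ZMod m × ZMod m → k)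
    (hμ : ∀ p, Φ (vv k m ζ a b p) = μ p • vv k m ζ a b p) (hμm : ∀ p, μ p ^ m = 1)
    (q : ZMod m × ZMod m) :
    (∑ p, (if μ p = μ q then (m : k) * c p else 0) • vv k m ζ a b p) ∈ I := by
  classical
  have hmm : m ≠ 0 := NeZero.ne m
  have hμ0 : ∀ p, μ p ≠ 0 := by
    intro p h
    have h2 := hμm p
    rw [h, zero_pow hmm] at h2
    exact zero_ne_one h2
  have hpow : ∀ (t : ℕ) p, (Φ ^ t) (vv k m ζ a b p) = μ p ^ t • vv k m ζ a b p := by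
    intro t
    induction t with
    | zero => intro p; simp
    | succ t ih =>
      intro p
      rw [pow_succ', Module.End.mul_apply, ih, map_smul, hμ, smul_smul, pow_succ]
      try ring_nf
  set z := ∑ p, c p • vv k m ζ a b p with hzdef
  have hmem : ∀ t : ℕ, (Φ ^ t) z ∈ I := by
    intro t
    induction t with
    | zero => simpa using hzI
    | succ t ih =>
      rw [pow_succ', Module.End.mul_apply]
      exact hΦI _ ih
  have hz1 : (∑ t ∈ Finset.range m, (μ q)⁻¹ ^ t • (Φ ^ t) z) ∈ I :=
    sum_mem fun t _ => smul_mem_I I _ (hmem t)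
  have heq : ∑ t ∈ Finset.range m, (μ q)⁻¹ ^ t • (Φ ^ t) z
      = ∑ p, (if μ p = μ q then (m : k) * c p else 0) • vv k m ζ a b p := by
    calc ∑ t ∈ Finset.range m, (μ q)⁻¹ ^ t • (Φ ^ t) z
        = ∑ t ∈ Finset.range m, ∑ p, ((μ q)⁻¹ ^ t * (c p * μ p ^ t)) • vv k m ζ a b p := by
          apply Finset.sum_congr rfl
          intro t _
          rw [hzdef, map_sum, Finset.smul_sum]
          apply Finset.sum_congr rfl
          intro p _
          rw [map_smul, hpow, smul_smul, smul_smul]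
          try ring_nf
      _ = ∑ p, ∑ t ∈ Finset.range m, ((μ q)⁻¹ ^ t * (c p * μ p ^ t)) • vv k m ζ a b p :=
          Finset.sum_comm
      _ = ∑ p, (∑ t ∈ Finset.range m, (μ q)⁻¹ ^ t * (c p * μ p ^ t)) • vv k m ζ a b p := by
          apply Finset.sum_congr rfl
          intro p _
          rw [Finset.sum_smul]
      _ = ∑ p, (if μ p = μ q then (m : k) * c p else 0) • vv k m ζ a b p := by
          apply Finset.sum_congr rfl
          intro p _
          congr 1
          have hterm : ∀ t : ℕ, (μ q)⁻¹ ^ t * (c p * μ p ^ t) = c p * (μ p * (μ q)⁻¹) ^ t := by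
            intro t; rw [mul_pow]; ring
          rw [Finset.sum_congr rfl fun t _ => hterm t, ← Finset.mul_sum]
          by_cases hpq : μ p = μ q
          · rw [if_pos hpq, hpq, mul_inv_cancel₀ (hμ0 q)]
            simp only [one_pow, Finset.sum_const, Finset.card_range, nsmul_eq_mul]
            ring
          · rw [if_neg hpq]
            have hu1 : μ p * (μ q)⁻¹ ≠ 1 := fun h => hpq ((mul_inv_eq_one₀ (hμ0 q)).1 h)
            have hum : (μ p * (μ q)⁻¹) ^ m = 1 := by
              rw [mul_pow, hμm, inv_pow, hμm, inv_one, mul_one]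
            rw [geom_sum_eq hu1, hum, sub_self, zero_div, mul_zero]
  rw [← heq]
  exact hz1

end CyclicAux3

namespace CyclicAux4
open CyclicAux CyclicAux2 CyclicAux3

variable {k : Type*} [Field k] {m : ℕ} [NeZero m] {ζ a b : k}

local notation "Q" => CyclicAlg k m ζ a b

variable (k m) in
noncomputable def Phi (ζ a b : k) : CyclicAlg k m ζ a b →ₗ[k] CyclicAlg k m ζ a b :=
  a⁻¹ • ((LinearMap.mulRight k (Xq k m ζ a b ^ (m - 1))).comp
    (LinearMap.mulLeft k (Xq k m ζ a b)))

variable (k m) in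
noncomputable def Psi (ζ a b : k) : CyclicAlg k m ζ a b →ₗ[k] CyclicAlg k m ζ a b :=
  b⁻¹ • ((LinearMap.mulRight k (Yq k m ζ a b ^ (m - 1))).comp
    (LinearMap.mulLeft k (Yq k m ζ a b)))

lemma Phi_apply (u : Q) :
    Phi k m ζ a b u = a⁻¹ • (Xq k m ζ a b * u * Xq k m ζ a b ^ (m - 1)) := by
  simp [Phi]

lemma Psi_apply (u : Q) :
    Psi k m ζ a b u = b⁻¹ • (Yq k m ζ a b * u * Yq k m ζ a b ^ (m - 1)) := by
  simp [Psi]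

lemma Phi_mem (I : TwoSidedIdeal Q) {u : Q} (hu : u ∈ I) : Phi k m ζ a b u ∈ I := by
  rw [Phi_apply]
  exact smul_mem_I I _ (I.mul_mem_right _ _ (I.mul_mem_left _ _ hu))

lemma Psi_mem (I : TwoSidedIdeal Q) {u : Q} (hu : u ∈ I) : Psi k m ζ a b u ∈ I := by
  rw [Psi_apply]
  exact smul_mem_I I _ (I.mul_mem_right _ _ (I.mul_mem_left _ _ hu))

lemma Phi_eigen (hz : ζ ≠ 0) (ha : a ≠ 0) (p : ZMod m × ZMod m) :
    Phi k m ζ a b (vv k m ζ a b p) = ζ ^ p.2.val • vv k m ζ a b p := by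
  have hm1 : m - 1 + 1 = m := Nat.succ_pred_eq_of_pos (NeZero.pos m)
  rw [Phi_apply, Xq_mul_vv hz, smul_mul_assoc, mul_assoc, ← pow_succ', hm1, Xq_pow_m,
    ← Algebra.commutes, ← Algebra.smul_def, smul_smul, smul_smul]
  congr 1
  field_simp

lemma Psi_eigen (hz : ζ ≠ 0) (hb : b ≠ 0) (p : ZMod m × ZMod m) :
    Psi k m ζ a b (vv k m ζ a b p) = (ζ⁻¹) ^ p.1.val • vv k m ζ a b p := by
  have hm1 : m - 1 + 1 = m := Nat.succ_pred_eq_of_pos (NeZero.pos m)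
  rw [Psi_apply, Yq_mul_vv hz, smul_mul_assoc, mul_assoc, ← pow_succ', hm1, Yq_pow_m,
    ← Algebra.commutes, ← Algebra.smul_def, smul_smul, smul_smul]
  congr 1
  field_simp

lemma val_inj {x y : ZMod m} (h : x.val = y.val) : x = y := ZMod.val_injective m h

section main

variable (hm2 : 2 ≤ m) (hζ : IsPrimitiveRoot ζ m) (ha : a ≠ 0) (hb : b ≠ 0)

include hm2 hζ ha hb

lemma center_le : Subalgebra.center k Q ≤ ⊥ := by
  have hz : ζ ≠ 0 := hζ.ne_zero (NeZero.ne m)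
  have hζ1 : ζ ^ m = 1 := hζ.pow_eq_one
  have hli := vv_linearIndependent (m := m) ha hb hz hζ1
  set B : Module.Basis (ZMod m × ZMod m) k Q :=
    Module.Basis.mk hli (vv_span hm2 hz).ge with hB
  intro z hzc
  have hexp0 : ∑ p, B.repr z p • vv k m ζ a b p = z := by
    have h := B.sum_repr z
    simpa only [hB, Module.Basis.coe_mk] using h
  obtain ⟨c, hexp⟩ : ∃ c : ZMod m × ZMod m → k, ∑ p, c p • vv k m ζ a b p = z :=
    ⟨fun p => B.repr z p, hexp0⟩
  clear hexp0
  have hXc : Xq k m ζ a b * z = z * Xq k m ζ a b := Subalgebra.mem_center_iff.1 hzc _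
  have hYc : Yq k m ζ a b * z = z * Yq k m ζ a b := Subalgebra.mem_center_iff.1 hzc _
  have keyX : ∀ p : ZMod m × ZMod m, c p = c p * (ζ⁻¹) ^ p.2.val := by
    have e1 : z * Xq k m ζ a b
        = Xq k m ζ a b * ∑ p, (c p * (ζ⁻¹) ^ p.2.val) • vv k m ζ a b p := by
      rw [← hexp, Finset.sum_mul, Finset.mul_sum]
      apply Finset.sum_congr rfl
      intro p _
      rw [smul_mul_assoc, vv_mul_Xq hz, mul_smul_comm, smul_smul]
    have e2 : Xq k m ζ a b * ∑ p, c p • vv k m ζ a b p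
        = Xq k m ζ a b * ∑ p, (c p * (ζ⁻¹) ^ p.2.val) • vv k m ζ a b p := by
      rw [hexp, hXc, e1]
    exact coeff_eq hli ((isUnit_Xq (m := m) (ζ := ζ) (b := b) ha).mul_left_cancel e2)
  have keyY : ∀ p : ZMod m × ZMod m, c p * (ζ⁻¹) ^ p.1.val = c p := by
    have e1 : Yq k m ζ a b * z
        = (∑ p, (c p * (ζ⁻¹) ^ p.1.val) • vv k m ζ a b p) * Yq k m ζ a b := by
      rw [← hexp, Finset.mul_sum, Finset.sum_mul]
      apply Finset.sum_congr rfl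
      intro p _
      rw [mul_smul_comm, Yq_mul_vv hz, smul_mul_assoc, smul_smul]
    have e2 : (∑ p, (c p * (ζ⁻¹) ^ p.1.val) • vv k m ζ a b p) * Yq k m ζ a b
        = (∑ p, c p • vv k m ζ a b p) * Yq k m ζ a b := by
      rw [hexp, ← e1, hYc]
    exact coeff_eq hli ((isUnit_Yq (m := m) (ζ := ζ) (a := a) hb).mul_right_cancel e2)
  have hcp : ∀ p : ZMod m × ZMod m, p ≠ 0 → c p = 0 := by
    intro p hp
    by_contra hcp0
    apply hp
    have hp1 : p.1 = 0 := by
      have h2 : (ζ⁻¹) ^ p.1.val = 1 :=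
        mul_left_cancel₀ hcp0 ((keyY p).trans (mul_one _).symm)
      have h3 : (ζ⁻¹) ^ p.1.val = (ζ⁻¹) ^ 0 := by rw [h2, pow_zero]
      have := (hζ.inv).pow_inj (ZMod.val_lt p.1) (NeZero.pos m) h3
      exact (ZMod.val_eq_zero p.1).1 this
    have hp2 : p.2 = 0 := by
      have h2 : (ζ⁻¹) ^ p.2.val = 1 :=
        (mul_left_cancel₀ hcp0 ((mul_one (c p)).trans (keyX p))).symm
      have h3 : (ζ⁻¹) ^ p.2.val = (ζ⁻¹) ^ 0 := by rw [h2, pow_zero]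
      have := (hζ.inv).pow_inj (ZMod.val_lt p.2) (NeZero.pos m) h3
      exact (ZMod.val_eq_zero p.2).1 this
    exact Prod.ext hp1 hp2
  have hzeq : z = c 0 • vv k m ζ a b 0 := by
    rw [← hexp]
    exact Finset.sum_eq_single (0 : ZMod m × ZMod m)
      (fun p _ hp => by rw [hcp p hp, zero_smul])
      (fun h => absurd (Finset.mem_univ (0 : ZMod m × ZMod m)) h)
  rw [hzeq, vv_zero]
  exact Algebra.mem_bot.2 ⟨c 0, (Algebra.algebraMap_eq_smul_one (c 0))⟩

lemma one_mem_I (I : TwoSidedIdeal Q) (z : Q) (hzI : z ∈ I) (hz0 : z ≠ 0) :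
    (1 : Q) ∈ I := by
  classical
  have hz : ζ ≠ 0 := hζ.ne_zero (NeZero.ne m)
  have hζ1 : ζ ^ m = 1 := hζ.pow_eq_one
  have hm0 : ((m : ℕ) : k) ≠ 0 := (hζ.neZero').out
  have hli := vv_linearIndependent (m := m) ha hb hz hζ1
  set B : Module.Basis (ZMod m × ZMod m) k Q :=
    Module.Basis.mk hli (vv_span hm2 hz).ge with hB
  have hexp0 : ∑ p, B.repr z p • vv k m ζ a b p = z := by
    have h := B.sum_repr z
    simpa only [hB, Module.Basis.coe_mk] using h
  obtain ⟨c, hexp⟩ : ∃ c : ZMod m × ZMod m → k, ∑ p, c p • vv k m ζ a b p = z :=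
    ⟨fun p => B.repr z p, hexp0⟩
  clear hexp0
  have hqex : ∃ q, c q ≠ 0 := by
    by_contra h
    push_neg at h
    apply hz0
    rw [← hexp]
    exact Finset.sum_eq_zero fun p _ => by rw [h p, zero_smul]
  obtain ⟨q, hq0⟩ := hqex
  have h1 := extract hm0 c I (by rw [hexp]; exact hzI) (Phi k m ζ a b)
      (fun u hu => Phi_mem I hu) (fun p => ζ ^ p.2.val) (fun p => Phi_eigen hz ha p)
      (fun p => by rw [pow_right_comm, hζ1, one_pow]) q
  set c1 : ZMod m × ZMod m → k :=
    fun p => if ζ ^ p.2.val = ζ ^ q.2.val then (m : k) * c p else 0 with hc1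
  have h1' : (∑ p, c1 p • vv k m ζ a b p) ∈ I := h1
  have h2 := extract hm0 c1 I h1' (Psi k m ζ a b)
      (fun u hu => Psi_mem I hu) (fun p => (ζ⁻¹) ^ p.1.val) (fun p => Psi_eigen hz hb p)
      (fun p => by rw [pow_right_comm, inv_pow, hζ1, inv_one, one_pow]) q
  have hsum : ∑ p,
      (if (ζ⁻¹) ^ p.1.val = (ζ⁻¹) ^ q.1.val then (m : k) * c1 p else 0) • vv k m ζ a b p
      = ((m : k) * ((m : k) * c q)) • vv k m ζ a b q := by
    rw [Finset.sum_eq_single q]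
    · rw [if_pos rfl]
      have : c1 q = (m : k) * c q := by rw [hc1]; exact if_pos rfl
      rw [this]
    · intro p _ hpq
      by_cases hA : (ζ⁻¹) ^ p.1.val = (ζ⁻¹) ^ q.1.val
      · have hp1 : p.1 = q.1 :=
          val_inj ((hζ.inv).pow_inj (ZMod.val_lt p.1) (ZMod.val_lt q.1) hA)
        have hp2 : p.2 ≠ q.2 := fun h => hpq (Prod.ext hp1 h)
        have hB2 : ζ ^ p.2.val ≠ ζ ^ q.2.val := fun h =>
          hp2 (val_inj (hζ.pow_inj (ZMod.val_lt p.2) (ZMod.val_lt q.2) h))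
        have : c1 p = 0 := by rw [hc1]; exact if_neg hB2
        rw [if_pos hA, this, mul_zero, zero_smul]
      · rw [if_neg hA, zero_smul]
    · intro h; exact absurd (Finset.mem_univ q) h
  have h2' : (∑ p,
      (if (ζ⁻¹) ^ p.1.val = (ζ⁻¹) ^ q.1.val then (m : k) * c1 p else 0) • vv k m ζ a b p) ∈ I :=
    h2
  rw [hsum] at h2'
  set e : k := (m : k) * ((m : k) * c q) with he
  have he0 : e ≠ 0 := mul_ne_zero hm0 (mul_ne_zero hm0 hq0)
  obtain ⟨u, hu⟩ := isUnit_vv (m := m) (ζ := ζ) ha hb q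
  have hfin : (1 : Q) = e⁻¹ • ((e • vv k m ζ a b q) * ↑u⁻¹) := by
    rw [smul_mul_assoc, ← hu, Units.mul_inv, smul_smul, inv_mul_cancel₀ he0, one_smul]
  rw [hfin]
  exact smul_mem_I I _ (I.mul_mem_right _ _ h2')

end main
end CyclicAux4

/-- Let `k` be a field containing a primitive `m`-th root of unity
`ζ` (`m ≥ 2`), and `a, b ∈ k` nonzero.  Then
`Q := k⟨X, Y⟩/(XY − ζYX, X^m − a, Y^m − b)` is a central simple `k`-algebra of
`k`-dimension `m²`; in particular it defines a class in the Brauer group `Br(k)`. -/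
theorem cyclicAlg_central_simple (k : Type*) [Field k] (m : ℕ) (hm : 2 ≤ m)
    (ζ : k) (hζ : IsPrimitiveRoot ζ m) (a b : k) (ha : a ≠ 0) (hb : b ≠ 0) :
    IsSimpleRing (CyclicAlg k m ζ a b) ∧
    Subalgebra.center k (CyclicAlg k m ζ a b) = ⊥ ∧
    Module.finrank k (CyclicAlg k m ζ a b) = m ^ 2 := by
  haveI : NeZero m := ⟨by omega⟩
  have hz : ζ ≠ 0 := hζ.ne_zero (NeZero.ne m)
  have hζ1 : ζ ^ m = 1 := hζ.pow_eq_one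
  have hli := CyclicAux.vv_linearIndependent (m := m) ha hb hz hζ1
  let B : Module.Basis (ZMod m × ZMod m) k (CyclicAlg k m ζ a b) :=
    Module.Basis.mk hli (CyclicAux2.vv_span hm hz).ge
  haveI : Nontrivial (CyclicAlg k m ζ a b) := by
    refine ⟨1, 0, ?_⟩
    have h := hli.ne_zero 0
    rwa [CyclicAux2.vv_zero] at h
  refine ⟨?_, ?_, ?_⟩
  · haveI : Nontrivial (TwoSidedIdeal (CyclicAlg k m ζ a b)) := by
      refine ⟨⊥, ⊤, fun h => ?_⟩
      have h1 : (1 : CyclicAlg k m ζ a b) ∈ (⊥ : TwoSidedIdeal (CyclicAlg k m ζ a b)) := by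
        rw [h]; exact TwoSidedIdeal.mem_top _
      exact one_ne_zero ((TwoSidedIdeal.mem_bot _).1 h1)
    haveI hso : IsSimpleOrder (TwoSidedIdeal (CyclicAlg k m ζ a b)) := by
      constructor
      intro I
      by_cases hI : ∃ z ∈ I, z ≠ 0
      · obtain ⟨z, hzI, hz0⟩ := hI
        right
        exact TwoSidedIdeal.eq_top I (CyclicAux4.one_mem_I hm hζ ha hb I z hzI hz0)
      · left
        push_neg at hI
        exact eq_bot_iff.2 fun x hx => (TwoSidedIdeal.mem_bot _).2 (hI x hx)
    exact ⟨hso⟩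
  · exact le_antisymm (CyclicAux4.center_le hm hζ ha hb) bot_le
  · rw [Module.finrank_eq_card_basis B]
    simp [ZMod.card, sq]
end
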